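/- arXiv:1711.05163 — 11 statements merged into one kernel-verified Lean document; each statement's English description precedes it below -/
import Mathlib

section
/- Let M be a congruence-simple right S-semimodule over a semiring S (i.e., M is nonzero and its only congruences are the identity and the universal congruence). Then M is either additively idempotent (m + m = m for all m ∈ M) or M is a module (its additive monoid is an abelian group). -/
/-- A congruence on a (left) `S`-semimodule `M`: an equivalence relation compatible
with addition and scalar multiplication. -/
def IsModCon (S : Type) {M : Type} [Semiring S] [AddCommMonoid M] [Module S M]
    (r : M → M → Prop) : Prop :=
  Equivalence r ∧ (∀ a b c d : M, r a b → r c d → r (a + c) (b + d)) ∧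
    ∀ (s : S) (a b : M), r a b → r (s • a) (s • b)

/-- `M` is congruence-simple: nonzero and its only congruences are the identity
and the universal congruence. -/
def CongSimple (S M : Type) [Semiring S] [AddCommMonoid M] [Module S M] : Prop :=
  (∃ m : M, m ≠ 0) ∧
    ∀ r : M → M → Prop, IsModCon S r → (∀ a b, r a b ↔ a = b) ∨ (∀ a b, r a b)

/-- A congruence-simple semimodule is either additively idempotent or a module
(its additive monoid is a group). -/
theorem congSimple_idempotent_or_module (S M : Type) [Semiring S] [AddCommMonoid M]
    [Module S M] (h : CongSimple S M) :
    (∀ m : M, m + m = m) ∨ (∀ m : M, ∃ n : M, m + n = 0) := by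
  -- The key congruence: mutual divisibility up to ℕ-multiples.
  set r : M → M → Prop := fun a b =>
    (∃ (n : ℕ) (x : M), a + x = n • b) ∧ (∃ (n : ℕ) (x : M), b + x = n • a) with hr
  have href : ∀ a : M, r a a := fun a => ⟨⟨1, 0, by simp⟩, ⟨1, 0, by simp⟩⟩
  have hle_trans : ∀ a b c : M, (∃ (n : ℕ) (x : M), a + x = n • b) →
      (∃ (n : ℕ) (x : M), b + x = n • c) → (∃ (n : ℕ) (x : M), a + x = n • c) := by
    rintro a b c ⟨n, x, hx⟩ ⟨m, y, hy⟩
    refine ⟨n * m, x + n • y, ?_⟩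
    rw [← add_assoc, hx, ← smul_add, hy, ← mul_smul]
  have hcon : IsModCon S r := by
    refine ⟨⟨href, ?_, ?_⟩, ?_, ?_⟩
    · rintro a b ⟨h1, h2⟩; exact ⟨h2, h1⟩
    · rintro a b c ⟨h1, h2⟩ ⟨h3, h4⟩
      exact ⟨hle_trans _ _ _ h1 h3, hle_trans _ _ _ h4 h2⟩
    · have key : ∀ a b c d : M, (∃ (n : ℕ) (x : M), a + x = n • b) →
          (∃ (n : ℕ) (x : M), c + x = n • d) →
          ∃ (n : ℕ) (x : M), (a + c) + x = n • (b + d) := by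
        rintro a b c d ⟨n, x, hx⟩ ⟨m, y, hy⟩
        refine ⟨n + m, (x + y) + (m • b + n • d), ?_⟩
        rw [add_smul, smul_add, smul_add]
        calc a + c + (x + y + (m • b + n • d))
            = (a + x) + (c + y) + (m • b + n • d) := by abel
          _ = n • b + m • d + (m • b + n • d) := by rw [hx, hy]
          _ = n • b + n • d + (m • b + m • d) := by abel
      rintro a b c d ⟨h1, h2⟩ ⟨h3, h4⟩
      exact ⟨key a b c d h1 h3, key b a d c h2 h4⟩
    · have key : ∀ (s : S) (a b : M), (∃ (n : ℕ) (x : M), a + x = n • b) →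
          ∃ (n : ℕ) (x : M), s • a + x = n • (s • b) := by
        rintro s a b ⟨n, x, hx⟩
        refine ⟨n, s • x, ?_⟩
        rw [← smul_add, hx, smul_comm]
      rintro s a b ⟨h1, h2⟩
      exact ⟨key s a b h1, key s b a h2⟩
  rcases h.2 r hcon with hd | hu
  · left
    intro m
    have : r (m + m) m := by
      constructor
      · exact ⟨2, 0, by rw [add_zero, two_smul]⟩
      · exact ⟨1, m, by rw [one_smul]⟩
    exact (hd _ _).1 this
  · right
    intro m
    obtain ⟨⟨n, x, hx⟩, -⟩ := hu m 0
    exact ⟨x, by rw [hx, smul_zero]⟩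
end

section
/- Let M be an additively idempotent right S-semimodule over a semiring S. Then the relation x ∼ y defined by Ann(x) = Ann(y), where Ann(m) = {s ∈ S : m·s = 0}, is a congruence on M. -/
lemma add_eq_zero_left {M : Type} [AddCommMonoid M] (hid : ∀ m : M, m + m = m)
    {x y : M} (h : x + y = 0) : x = 0 := by
  calc x = x + 0 := (add_zero x).symm
    _ = x + (x + y) := by rw [h]
    _ = (x + x) + y := (add_assoc x x y).symm
    _ = x + y := by rw [hid]
    _ = 0 := h

/-- On an additively idempotent semimodule, the relation "equal annihilators"
(`Ann(m) = {s : S | s • m = 0}`) is a congruence. -/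
theorem annihilator_rel_isCon (S M : Type) [Semiring S] [AddCommMonoid M] [Module S M]
    (hid : ∀ m : M, m + m = m) :
    IsModCon S (M := M) (fun x y => {s : S | s • x = 0} = {s : S | s • y = 0}) := by
  have key : ∀ s : S, ∀ x y : M, s • (x + y) = 0 ↔ s • x = 0 ∧ s • y = 0 := by
    intro s x y
    rw [smul_add]
    constructor
    · intro h
      exact ⟨add_eq_zero_left hid h, add_eq_zero_left hid (by rwa [add_comm] at h)⟩
    · rintro ⟨h1, h2⟩; rw [h1, h2, add_zero]
  refine ⟨⟨fun _ => rfl, fun h => h.symm, fun h1 h2 => h1.trans h2⟩, ?_, ?_⟩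
  · intro a b c d hab hcd
    ext s
    simp only [Set.mem_setOf_eq, key]
    rw [show (s • a = 0) = (s • b = 0) from congrArg (s ∈ ·) hab,
        show (s • c = 0) = (s • d = 0) from congrArg (s ∈ ·) hcd]
  · intro t a b hab
    ext s
    simp only [Set.mem_setOf_eq, smul_smul]
    exact iff_of_eq (congrArg ((s * t) ∈ ·) hab)
end

section
/- The endomorphism semiring End_S(M) of any cyclic congruence-simple right S-semimodule M is either a division ring or isomorphic to the Boolean semifield 𝔹 = ({0,1}, max, min). -/
/-- The Boolean semifield `𝔹 = ({0,1}, max, min)`. -/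
inductive Bsf : Type
  | zero
  | one
  deriving DecidableEq

instance : Fintype Bsf := ⟨{Bsf.zero, Bsf.one}, fun x => by cases x <;> simp⟩

instance : Zero Bsf := ⟨.zero⟩
instance : One Bsf := ⟨.one⟩
instance : Add Bsf := ⟨fun a b => match a, b with | .zero, x => x | .one, _ => .one⟩
instance : Mul Bsf := ⟨fun a b => match a, b with | .zero, _ => .zero | .one, x => x⟩

instance : CommSemiring Bsf where
  nsmul := nsmulRec
  add_assoc := by decide
  zero_add := by decide
  add_zero := by decide
  add_comm := by decide
  mul_assoc := by decide
  one_mul := by decide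
  mul_one := by decide
  left_distrib := by decide
  right_distrib := by decide
  zero_mul := by decide
  mul_zero := by decide
  mul_comm := by decide

/-! The algebraic preorder `a ≤ b ↔ ∃ c, a + c = b` is compatible with the semimodule structure,
so its symmetric part is a congruence: if it is trivial, `M` is zero-sum-free; if it is total,
`M` is an abelian group.

In the group case a nonzero endomorphism `f` is injective by its kernel congruence and surjective
by the Bourne congruence `a ~ b ↔ a + f u = b + f v` of its range, so `End_S(M)` is a division ring.

In the zero-sum-free case, let `P` be a compatible preorder and `g` an endomorphism with
`P x (g x)`. Then `a ~ b ↔ ∃ n, P a (gⁿ b) ∧ P b (gⁿ a)` is a congruence relating `x` to `g x`;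
it is not total when `0` is related only to itself, and then `g = 1`. For `P = ≤` and
`g = 1 + f` this gives `f ≤ 1` for every `f`; for `P = ≥` and an injective `g = f` it gives
`f = 1`. Hence `End_S(M) = {0, 1}` with `1 + 1 = 1`. -/

def IsSummand {M : Type*} [Add M] (a b : M) : Prop :=
  ∃ c, a + c = b

theorem IsSummand.map {F M N : Type*} [Add M] [Add N] [FunLike F M N] [AddHomClass F M N]
    (f : F) {a b : M} (h : IsSummand a b) : IsSummand (f a) (f b) := by
  obtain ⟨c, rfl⟩ := h
  exact ⟨f c, (map_add f a c).symm⟩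

theorem isSummand_zero_iff {M : Type*} [AddZeroClass M]
    (hzsf : ∀ a b : M, a + b = 0 → a = 0) {a : M} : IsSummand a 0 ↔ a = 0 :=
  ⟨fun ⟨c, hc⟩ => hzsf a c hc, fun h => ⟨0, by rw [h, add_zero]⟩⟩

structure IsModPreorder (S : Type) {M : Type} [Semiring S] [AddCommMonoid M] [Module S M]
    (P : M → M → Prop) : Prop where
  refl : ∀ a, P a a
  trans : ∀ {a b c}, P a b → P b c → P a c
  add : ∀ {a b c d}, P a b → P c d → P (a + c) (b + d)
  smul : ∀ (s : S) {a b}, P a b → P (s • a) (s • b)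

section
variable {S M : Type} [Semiring S] [AddCommMonoid M] [Module S M]

theorem isModPreorder_isSummand : IsModPreorder S (IsSummand (M := M)) where
  refl a := ⟨0, add_zero a⟩
  trans := fun ⟨c, hc⟩ ⟨d, hd⟩ => ⟨c + d, by rw [← add_assoc, hc, hd]⟩
  add := fun ⟨c, hc⟩ ⟨d, hd⟩ => ⟨c + d, by rw [add_add_add_comm, hc, hd]⟩
  smul s := fun ⟨c, hc⟩ => ⟨s • c, by rw [← smul_add, hc]⟩

theorem IsModPreorder.flip {P : M → M → Prop} (hP : IsModPreorder S P) :
    IsModPreorder S (flip P) where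
  refl := hP.refl
  trans h₁ h₂ := hP.trans h₂ h₁
  add := hP.add
  smul s _ _ h := hP.smul s h

theorem IsModPreorder.isModCon_symm {P : M → M → Prop} (hP : IsModPreorder S P) :
    IsModCon S (fun a b => P a b ∧ P b a) :=
  ⟨⟨fun a => ⟨hP.refl a, hP.refl a⟩, fun h => ⟨h.2, h.1⟩,
      fun h₁ h₂ => ⟨hP.trans h₁.1 h₂.1, hP.trans h₂.2 h₁.2⟩⟩,
    fun _ _ _ _ h₁ h₂ => ⟨hP.add h₁.1 h₂.1, hP.add h₁.2 h₂.2⟩,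
    fun s _ _ h => ⟨hP.smul s h.1, hP.smul s h.2⟩⟩

theorem isModCon_ker (f : Module.End S M) : IsModCon S (fun a b => f a = f b) :=
  ⟨⟨fun _ => rfl, Eq.symm, Eq.trans⟩,
    fun _ _ _ _ h₁ h₂ => show f (_ + _) = f (_ + _) by rw [map_add, map_add, h₁, h₂],
    fun s _ _ h => show f (_ • _) = f (_ • _) by rw [map_smul, map_smul, h]⟩

theorem isModCon_bourne (N : Submodule S M) :
    IsModCon S (fun a b => ∃ u ∈ N, ∃ v ∈ N, a + u = b + v) := by
  refine ⟨⟨fun a => ⟨0, N.zero_mem, 0, N.zero_mem, rfl⟩,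
    fun ⟨u, hu, v, hv, h⟩ => ⟨v, hv, u, hu, h.symm⟩, ?_⟩, ?_, ?_⟩
  · rintro a b c ⟨u, hu, v, hv, h₁⟩ ⟨u', hu', v', hv', h₂⟩
    refine ⟨u + u', N.add_mem hu hu', v + v', N.add_mem hv hv', ?_⟩
    calc a + (u + u') = (b + u') + v := by rw [← add_assoc, h₁, add_right_comm]
      _ = c + (v + v') := by rw [h₂, add_right_comm, add_assoc]
  · rintro a b c d ⟨u, hu, v, hv, h₁⟩ ⟨u', hu', v', hv', h₂⟩
    exact ⟨u + u', N.add_mem hu hu', v + v', N.add_mem hv hv',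
      by rw [add_add_add_comm, h₁, h₂, add_add_add_comm]⟩
  · rintro s a b ⟨u, hu, v, hv, h⟩
    exact ⟨s • u, N.smul_mem s hu, s • v, N.smul_mem s hv, by rw [← smul_add, h, smul_add]⟩

def iterBoundRel (P : M → M → Prop) (g : Module.End S M) (a b : M) : Prop :=
  ∃ n : ℕ, P a ((g ^ n) b) ∧ P b ((g ^ n) a)

theorem rel_pow_apply_pow_apply {P : M → M → Prop} {g : Module.End S M}
    (hmono : ∀ {a b}, P a b → P (g a) (g b)) (n : ℕ) {a b : M} (h : P a b) :
    P ((g ^ n) a) ((g ^ n) b) := by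
  induction n with
  | zero => exact h
  | succ n ih => rw [pow_succ', Module.End.mul_apply, Module.End.mul_apply]; exact hmono ih

theorem rel_self_pow_apply {P : M → M → Prop} (hP : IsModPreorder S P) {g : Module.End S M}
    (hinfl : ∀ x, P x (g x)) (n : ℕ) (x : M) : P x ((g ^ n) x) := by
  induction n generalizing x with
  | zero => exact hP.refl x
  | succ n ih => rw [pow_succ, Module.End.mul_apply]; exact hP.trans (hinfl x) (ih (g x))

theorem rel_pow_apply_mono {P : M → M → Prop} (hP : IsModPreorder S P) {g : Module.End S M}
    (hinfl : ∀ x, P x (g x)) {a b : M} {n N : ℕ} (h : P a ((g ^ n) b)) (hnN : n ≤ N) :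
    P a ((g ^ N) b) := by
  obtain ⟨k, rfl⟩ := Nat.exists_eq_add_of_le hnN
  rw [add_comm, pow_add, Module.End.mul_apply]
  exact hP.trans h (rel_self_pow_apply hP hinfl k _)

theorem isModCon_iterBoundRel {P : M → M → Prop} (hP : IsModPreorder S P) {g : Module.End S M}
    (hmono : ∀ {a b}, P a b → P (g a) (g b)) (hinfl : ∀ x, P x (g x)) :
    IsModCon S (iterBoundRel P g) := by
  refine ⟨⟨fun a => ⟨0, hP.refl a, hP.refl a⟩, fun ⟨n, h₁, h₂⟩ => ⟨n, h₂, h₁⟩, ?_⟩, ?_, ?_⟩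
  · rintro a b c ⟨n, hab, hba⟩ ⟨m, hbc, hcb⟩
    refine ⟨n + m, ?_, ?_⟩
    · rw [pow_add, Module.End.mul_apply]
      exact hP.trans hab (rel_pow_apply_pow_apply (P := P) hmono n hbc)
    · rw [add_comm, pow_add, Module.End.mul_apply]
      exact hP.trans hcb (rel_pow_apply_pow_apply (P := P) hmono m hba)
  · rintro a b c d ⟨n, hab, hba⟩ ⟨m, hcd, hdc⟩
    refine ⟨n + m, ?_, ?_⟩ <;> rw [map_add]
    · exact hP.add (rel_pow_apply_mono hP hinfl hab (Nat.le_add_right n m))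
        (rel_pow_apply_mono hP hinfl hcd (Nat.le_add_left m n))
    · exact hP.add (rel_pow_apply_mono hP hinfl hba (Nat.le_add_right n m))
        (rel_pow_apply_mono hP hinfl hdc (Nat.le_add_left m n))
  · rintro s a b ⟨n, hab, hba⟩
    exact ⟨n, by rw [map_smul]; exact hP.smul s hab, by rw [map_smul]; exact hP.smul s hba⟩

end

namespace CongSimple
variable {S M : Type} [Semiring S] [AddCommMonoid M] [Module S M]

theorem nontrivial (hcs : CongSimple S M) : Nontrivial M :=
  let ⟨m, hm⟩ := hcs.1
  ⟨⟨m, 0, hm⟩⟩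

theorem zeroSumFree_or_forall_exists_add_eq_zero (hcs : CongSimple S M) :
    (∀ a b : M, a + b = 0 → a = 0) ∨ ∀ a : M, ∃ b, a + b = 0 := by
  rcases hcs.2 _ (isModPreorder_isSummand (S := S)).isModCon_symm with htriv | htot
  · exact Or.inl fun a b h => (htriv a 0).1 ⟨⟨b, h⟩, ⟨a, zero_add a⟩⟩
  · exact Or.inr fun a => (htot a 0).1

theorem injective_of_ne_zero (hcs : CongSimple S M) {f : Module.End S M} (hf : f ≠ 0) :
    Function.Injective f := by
  rcases hcs.2 _ (isModCon_ker f) with htriv | htot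
  · exact fun a b h => (htriv a b).1 h
  · exact absurd (LinearMap.ext fun a => (htot a 0).trans (map_zero f)) hf

theorem eq_bot_or_forall_exists_add_mem (hcs : CongSimple S M) (N : Submodule S M) :
    N = ⊥ ∨ ∀ a, ∃ u ∈ N, a + u ∈ N := by
  rcases hcs.2 _ (isModCon_bourne N) with htriv | htot
  · refine Or.inl (eq_bot_iff.2 fun x hx => (Submodule.mem_bot S).2 ((htriv x 0).1 ?_))
    exact ⟨0, N.zero_mem, x, hx, by rw [add_zero, zero_add]⟩
  · refine Or.inr fun a => ?_
    obtain ⟨u, hu, v, hv, h⟩ := htot a 0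
    exact ⟨u, hu, by rwa [h, zero_add]⟩

theorem bijective_of_ne_zero (hcs : CongSimple S M) (hneg : ∀ a : M, ∃ b, a + b = 0)
    {f : Module.End S M} (hf : f ≠ 0) : Function.Bijective f := by
  refine ⟨hcs.injective_of_ne_zero hf, fun a => ?_⟩
  rcases hcs.eq_bot_or_forall_exists_add_mem (LinearMap.range f) with hbot | htop
  · exact absurd (LinearMap.range_eq_bot.1 hbot) hf
  obtain ⟨_, ⟨u, rfl⟩, v, hv⟩ := htop a
  obtain ⟨u', hu'⟩ := hneg u
  exact ⟨v + u', by rw [map_add, hv, add_assoc, ← map_add, hu', map_zero, add_zero]⟩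

theorem eq_one_of_inflationary {P : M → M → Prop} (hcs : CongSimple S M) (hP : IsModPreorder S P)
    {g : Module.End S M} (hmono : ∀ {a b}, P a b → P (g a) (g b)) (hinfl : ∀ x, P x (g x))
    (hzero : ∀ x, iterBoundRel P g x 0 → x = 0) : g = 1 := by
  obtain ⟨x₀, hx₀⟩ := hcs.1
  rcases hcs.2 _ (isModCon_iterBoundRel hP hmono hinfl) with htriv | htot
  · refine LinearMap.ext fun x => ((htriv x (g x)).1 ⟨1, ?_⟩).symm
    rw [pow_one]
    exact ⟨hP.trans (hinfl x) (hinfl (g x)), hP.refl _⟩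
  · exact absurd (hzero x₀ (htot x₀ 0)) hx₀

theorem one_add_eq_one (hcs : CongSimple S M) (hzsf : ∀ a b : M, a + b = 0 → a = 0)
    (f : Module.End S M) : 1 + f = 1 :=
  hcs.eq_one_of_inflationary isModPreorder_isSummand (fun h => h.map _) (fun x => ⟨f x, rfl⟩)
    fun x ⟨n, hx, _⟩ => (isSummand_zero_iff hzsf).1 (by rwa [map_zero] at hx)

theorem eq_one_of_ne_zero (hcs : CongSimple S M) (hzsf : ∀ a b : M, a + b = 0 → a = 0)
    {f : Module.End S M} (hf : f ≠ 0) : f = 1 := by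
  refine hcs.eq_one_of_inflationary isModPreorder_isSummand.flip (fun h => h.map f)
    (fun x => ⟨x, ?_⟩) fun x ⟨n, _, hx⟩ => ?_
  · rw [add_comm]
    exact LinearMap.congr_fun (hcs.one_add_eq_one hzsf f) x
  · have hfx : (f ^ n) x = (f ^ n) 0 := by
      rw [map_zero]
      exact (isSummand_zero_iff hzsf).1 hx
    rw [Module.End.coe_pow] at hfx
    exact (hcs.injective_of_ne_zero hf).iterate n hfx

end CongSimple

open Classical in
noncomputable def ringEquivBsf {R : Type*} [Semiring R] (h01 : (0 : R) ≠ 1)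
    (h11 : (1 : R) + 1 = 1) (h : ∀ r : R, r = 0 ∨ r = 1) : R ≃+* Bsf where
  toFun r := if r = 0 then 0 else 1
  invFun b := if b = 0 then 0 else 1
  left_inv r := by rcases h r with rfl | rfl <;> simp [h01.symm]
  right_inv b := by
    cases b <;> simp [h01.symm, show Bsf.zero = 0 from rfl, show Bsf.one = 1 from rfl]
  map_mul' r r' := by
    rcases h r with rfl | rfl <;> rcases h r' with rfl | rfl <;> simp [h01.symm]
  map_add' r r' := by
    rcases h r with rfl | rfl <;> rcases h r' with rfl | rfl <;>
      simp [h01.symm, h11, show (1 : Bsf) + 1 = 1 from rfl]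

theorem Module.End.exists_add_eq_zero {S M : Type*} [Semiring S] [AddCommMonoid M] [Module S M]
    (hneg : ∀ a : M, ∃ b, a + b = 0) (f : Module.End S M) : ∃ g : Module.End S M, f + g = 0 := by
  let _ : Neg M := ⟨fun a => (hneg a).choose⟩
  let _ : AddCommGroup M :=
    { ‹AddCommMonoid M› with
      zsmul := zsmulRec
      neg_add_cancel a := by rw [add_comm]; exact (hneg a).choose_spec }
  exact ⟨-f, add_neg_cancel f⟩

theorem end_of_cyclic_congSimple_general (S M : Type) [Semiring S] [AddCommMonoid M] [Module S M]
    (hcs : CongSimple S M) :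
    ((∀ f : Module.End S M, ∃ g : Module.End S M, f + g = 0) ∧
      (0 : Module.End S M) ≠ 1 ∧
      (∀ f : Module.End S M, f ≠ 0 → ∃ g : Module.End S M, f * g = 1 ∧ g * f = 1))
    ∨ Nonempty (Module.End S M ≃+* Bsf) := by
  have := hcs.nontrivial
  rcases hcs.zeroSumFree_or_forall_exists_add_eq_zero with hzsf | hneg
  · refine Or.inr ⟨ringEquivBsf zero_ne_one (hcs.one_add_eq_one hzsf 1) fun f => ?_⟩
    exact (em (f = 0)).imp_right (hcs.eq_one_of_ne_zero hzsf)
  · refine Or.inl ⟨Module.End.exists_add_eq_zero hneg, zero_ne_one, fun f hf => ?_⟩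
    exact isUnit_iff_exists.1 ((Module.End.isUnit_iff f).2 (hcs.bijective_of_ne_zero hneg hf))

/-- The endomorphism semiring of a cyclic congruence-simple `S`-semimodule is either
a division ring or (isomorphic to) the Boolean semifield `𝔹`. -/
theorem end_of_cyclic_congSimple (S M : Type) [Semiring S] [AddCommMonoid M] [Module S M]
    (hcyc : ∃ m : M, ∀ x : M, ∃ s : S, s • m = x) (hcs : CongSimple S M) :
    ((∀ f : Module.End S M, ∃ g : Module.End S M, f + g = 0) ∧
      (0 : Module.End S M) ≠ 1 ∧
      (∀ f : Module.End S M, f ≠ 0 → ∃ g : Module.End S M, f * g = 1 ∧ g * f = 1))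
    ∨ Nonempty (Module.End S M ≃+* Bsf) :=
  end_of_cyclic_congSimple_general S M hcs
end

section
/- Let I be a congruence-simple right ideal of a semiring S such that I = eS for some idempotent e ∈ S, and let M be a cyclic congruence-simple right S-semimodule. Then either M ≅ I as right S-semimodules or Hom_S(M, I) = 0. -/
/-- In a congruence-simple semimodule, if some nonzero element has an additive
inverse, then every element has an additive inverse. -/
lemma congSimple_group_of_exists_inv (S X : Type) [Semiring S] [AddCommMonoid X]
    [Module S X] (hX : CongSimple S X) (x₀ : X) (hx₀ : x₀ ≠ 0)
    (hinv : ∃ y, x₀ + y = 0) : ∀ x : X, ∃ y, x + y = 0 := by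
  have hcon : IsModCon S (fun x y : X =>
      ∃ w w' : X, (∃ a, w + a = 0) ∧ (∃ a, w' + a = 0) ∧ x + w = y + w') := by
    refine ⟨⟨fun x => ⟨0, 0, ⟨0, by simp⟩, ⟨0, by simp⟩, rfl⟩, ?_, ?_⟩, ?_, ?_⟩
    · rintro x y ⟨w, w', hw, hw', h⟩
      exact ⟨w', w, hw', hw, h.symm⟩
    · rintro x y z ⟨w, w', ⟨a, ha⟩, ⟨a', ha'⟩, h1⟩ ⟨w₂, w₂', ⟨b, hb⟩, ⟨b', hb'⟩, h2⟩
      refine ⟨w + w₂, w₂' + w', ⟨a + b, ?_⟩, ⟨b' + a', ?_⟩, ?_⟩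
      · rw [add_add_add_comm, ha, hb, add_zero]
      · rw [add_add_add_comm, hb', ha', add_zero]
      · rw [← add_assoc, h1, add_right_comm, h2, add_assoc]
    · rintro x y p q ⟨w, w', ⟨a, ha⟩, ⟨a', ha'⟩, h1⟩ ⟨w₂, w₂', ⟨b, hb⟩, ⟨b', hb'⟩, h2⟩
      refine ⟨w + w₂, w' + w₂', ⟨a + b, ?_⟩, ⟨a' + b', ?_⟩, ?_⟩
      · rw [add_add_add_comm, ha, hb, add_zero]
      · rw [add_add_add_comm, ha', hb', add_zero]
      · rw [add_add_add_comm, h1, h2, add_add_add_comm]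
    · rintro s x y ⟨w, w', ⟨a, ha⟩, ⟨a', ha'⟩, h⟩
      refine ⟨s • w, s • w', ⟨s • a, ?_⟩, ⟨s • a', ?_⟩, ?_⟩
      · rw [← smul_add, ha, smul_zero]
      · rw [← smul_add, ha', smul_zero]
      · rw [← smul_add, h, smul_add]
  rcases hX.2 _ hcon with h | h
  · exact absurd ((h x₀ 0).mp ⟨0, x₀, ⟨0, by simp⟩, hinv, by
      rw [add_zero, zero_add]⟩) hx₀
  · intro x
    obtain ⟨w, w', ⟨a, _⟩, ⟨a', ha'⟩, hx⟩ := h x 0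
    rw [zero_add] at hx
    exact ⟨w + a', by rw [← add_assoc, hx, ha']⟩

/-- If `I` is a congruence-simple ideal of `S` generated by an idempotent `e`, and `M`
is a cyclic congruence-simple `S`-semimodule, then `M ≅ I` or `Hom_S(M, I) = 0`. -/
theorem congSimple_ideal_hom_trichotomy (S M : Type) [Semiring S] [AddCommMonoid M]
    [Module S M] (I : Submodule S S) (e : S) (he : e * e = e)
    (hIe : I = Submodule.span S {e}) (hI : CongSimple S I)
    (hcyc : ∃ m : M, ∀ x : M, ∃ s : S, s • m = x) (hM : CongSimple S M) :
    Nonempty (M ≃ₗ[S] I) ∨ ∀ f : M →ₗ[S] I, f = 0 := by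
  subst hIe
  by_cases hf0 : ∀ f : M →ₗ[S] Submodule.span S {e}, f = 0
  · exact Or.inr hf0
  left
  push_neg at hf0
  obtain ⟨f, hf⟩ := hf0
  obtain ⟨m, hm⟩ := hcyc
  -- `f m ≠ 0`
  have hfm : f m ≠ 0 := by
    intro h0
    apply hf
    ext u
    obtain ⟨s, hs⟩ := hm u
    rw [← hs, map_smul, h0, smul_zero, LinearMap.zero_apply]
  -- `f` is injective
  have hinj : Function.Injective f := by
    have hcon : IsModCon S (fun u v : M => f u = f v) := by
      refine ⟨⟨fun _ => rfl, Eq.symm, Eq.trans⟩, ?_, ?_⟩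
      · intro a b c d h1 h2; rw [map_add, map_add, h1, h2]
      · intro s a b h; rw [map_smul, map_smul, h]
    rcases hM.2 _ hcon with h | h
    · intro a b hab; exact (h a b).mp hab
    · exact absurd (by rw [(h m 0 : f m = f 0), map_zero]) hfm
  -- `e ∈ I`
  have heI : e ∈ Submodule.span S {e} := Submodule.mem_span_singleton_self e
  -- every element of `I` is fixed by right multiplication by `e`
  have hxe : ∀ x : Submodule.span S {e}, (x : S) * e = (x : S) := by
    intro x
    obtain ⟨a, ha⟩ := Submodule.mem_span_singleton.mp x.2
    rw [← ha, smul_eq_mul, mul_assoc, he]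
  -- the Bourne congruence of `im f` on `I` is full, giving `e + f u₀ = f v₀`
  have hBcon : IsModCon S (fun x y : Submodule.span S {e} => ∃ u v : M, x + f u = y + f v) := by
    refine ⟨⟨fun x => ⟨0, 0, rfl⟩, ?_, ?_⟩, ?_, ?_⟩
    · rintro x y ⟨u, v, h⟩; exact ⟨v, u, h.symm⟩
    · rintro x y z ⟨u, v, h1⟩ ⟨u', v', h2⟩
      exact ⟨u + u', v' + v, by
        rw [map_add, map_add, ← add_assoc, h1, add_right_comm, h2, add_assoc]⟩
    · rintro x y p q ⟨u, v, h1⟩ ⟨u', v', h2⟩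
      exact ⟨u + u', v + v', by
        rw [map_add, map_add, add_add_add_comm, h1, h2, add_add_add_comm]⟩
    · rintro s x y ⟨u, v, h⟩
      exact ⟨s • u, s • v, by
        rw [map_smul, map_smul, ← smul_add, h, smul_add]⟩
  obtain ⟨u₀, v₀, h₀⟩ : ∃ u v : M, (⟨e, heI⟩ : Submodule.span S {e}) + f u = 0 + f v := by
    rcases hI.2 _ hBcon with h | h
    · exact absurd ((h (f m) 0).mp ⟨0, m, by rw [map_zero, add_zero, zero_add]⟩) hfm
    · exact h ⟨e, heI⟩ 0
  rw [zero_add] at h₀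
  -- key identity: `x + f (x • u₀) = f (x • v₀)` for all `x ∈ I`
  have hkey : ∀ x : Submodule.span S {e}, x + f ((x : S) • u₀) = f ((x : S) • v₀) := by
    intro x
    have h2 : (x : S) • (⟨e, heI⟩ : Submodule.span S {e}) = x := Subtype.ext (by
      simpa [smul_eq_mul] using hxe x)
    calc x + f ((x : S) • u₀) = (x : S) • (⟨e, heI⟩ : Submodule.span S {e}) + (x : S) • f u₀ := by
          rw [h2, map_smul]
      _ = (x : S) • ((⟨e, heI⟩ : Submodule.span S {e}) + f u₀) := (smul_add _ _ _).symm
      _ = (x : S) • f v₀ := by rw [h₀]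
      _ = f ((x : S) • v₀) := (map_smul f _ _).symm
  -- surjectivity of `f`
  have hsurj : Function.Surjective f := by
    by_cases hzs : ∀ x y : Submodule.span S {e}, x + y = 0 → x = 0
    · -- `I` is zero-sum-free
      have hzs2 : ∀ x y : Submodule.span S {e}, x + y = 0 ↔ x = 0 ∧ y = 0 := by
        intro x y
        constructor
        · intro h; exact ⟨hzs x y h, hzs y x (by rwa [add_comm])⟩
        · rintro ⟨rfl, rfl⟩; rw [add_zero]
      have hcon : IsModCon S (fun x y : Submodule.span S {e} => ∀ s : S, s • x = 0 ↔ s • y = 0) := by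
        refine ⟨⟨fun x s => Iff.rfl, fun h s => (h s).symm,
          fun h1 h2 s => (h1 s).trans (h2 s)⟩, ?_, ?_⟩
        · intro a b c d h1 h2 s
          rw [smul_add, smul_add, hzs2, hzs2, h1 s, h2 s]
        · intro t a b h s
          rw [smul_smul, smul_smul]
          exact h (s * t)
      rcases hI.2 _ hcon with htriv | hfull
      · intro x
        refine ⟨(x : S) • v₀, (htriv _ x).mp ?_⟩
        intro s
        constructor
        · intro hs
          have h1 : s • x + s • f ((x : S) • u₀) = 0 := by
            rw [← smul_add, hkey x, hs]
          exact hzs _ _ h1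
        · intro hs
          have hsx : s * (x : S) = 0 := congrArg Subtype.val hs
          rw [← map_smul, smul_smul, hsx, zero_smul, map_zero]
      · exfalso
        obtain ⟨z₀, hz₀⟩ := hI.1
        apply hz₀
        have h1 : ∀ s : S, s • (⟨e, heI⟩ : Submodule.span S {e}) = 0 := by
          intro s
          have := (hfull (⟨e, heI⟩ : Submodule.span S {e}) 0 s).mpr (smul_zero s)
          exact this
        have he0 : e = 0 := by
          have := congrArg Subtype.val (h1 e)
          simpa [smul_eq_mul, he] using this
        have h2 : ∀ s : S, s * e = s → s = 0 := by
          intro s hs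
          rw [← hs, he0, mul_zero]
        exact Subtype.ext ((h2 _ (hxe z₀)).trans (by simp))
    · -- `I` is not zero-sum-free, hence a group
      push_neg at hzs
      obtain ⟨x₀, y₀, hxy₀, hx₀⟩ := hzs
      have hIgroup : ∀ x : Submodule.span S {e}, ∃ y, x + y = 0 :=
        congSimple_group_of_exists_inv S _ hI x₀ hx₀ ⟨y₀, hxy₀⟩
      by_cases hMinv : ∀ u : M, (∃ v, u + v = 0) → u = 0
      · -- no nonzero element of `M` is invertible: then `x • u₀ = 0` always
        intro x
        obtain ⟨y, hy⟩ := hIgroup x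
        have hxy : (x : S) + (y : S) = 0 := congrArg Subtype.val hy
        have hu0 : (x : S) • u₀ = 0 := by
          apply hMinv
          exact ⟨(y : S) • u₀, by rw [← add_smul, hxy, zero_smul]⟩
        have := hkey x
        rw [hu0, map_zero, add_zero] at this
        exact ⟨(x : S) • v₀, this.symm⟩
      · -- some nonzero element of `M` is invertible: then `M` is a group
        push_neg at hMinv
        obtain ⟨u₁, hu₁inv, hu₁⟩ := hMinv
        have hMgroup : ∀ u : M, ∃ v, u + v = 0 :=
          congSimple_group_of_exists_inv S M hM u₁ hu₁ hu₁inv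
        intro x
        obtain ⟨w, hw⟩ := hMgroup ((x : S) • u₀)
        refine ⟨(x : S) • v₀ + w, ?_⟩
        rw [map_add, ← hkey x, add_assoc, ← map_add, hw, map_zero, add_zero]
  exact ⟨(LinearEquiv.ofBijective f ⟨hinj, hsurj⟩)⟩
end

section
/- A finitely generated right S-semimodule P is projective (respectively, strongly projective) if and only if there exist a positive integer n and an idempotent matrix A ∈ M_n(S) (respectively, an idempotent matrix A with a complementary idempotent B satisfying A + B = I and AB = BA = 0) such that A(Sⁿ) ≅ P, where A(Sⁿ) is the subsemimodule of Sⁿ generated by the columns of A. -/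
/-- `p` and `q` decompose `M` as an (internal) direct sum. -/
def IsSummandDecomp {S M : Type} [Semiring S] [AddCommMonoid M] [Module S M]
    (p q : Submodule S M) : Prop :=
  Function.Bijective fun ab : p × q => (ab.1 : M) + (ab.2 : M)

/-- A semimodule is strongly projective if it is isomorphic to a direct summand
of a free semimodule. -/
def StronglyProjective (S P : Type) [Semiring S] [AddCommMonoid P] [Module S P] : Prop :=
  ∃ (ι : Type) (p q : Submodule S (ι →₀ S)), IsSummandDecomp p q ∧ Nonempty (P ≃ₗ[S] p)

/-- A semimodule is finitely generated strongly projective if it is isomorphic to a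
direct summand of a finitely generated free semimodule. -/
def FGStronglyProjective (S P : Type) [Semiring S] [AddCommMonoid P] [Module S P] : Prop :=
  ∃ (n : ℕ) (p q : Submodule S (Fin n → S)), IsSummandDecomp p q ∧ Nonempty (P ≃ₗ[S] p)

/-! A finitely generated `P` is a quotient of some `Sⁿ`. If `P` is projective the quotient map
`π` has a section `σ`, so `σ ∘ π` is an idempotent endomorphism of `Sⁿ` with image `≅ P`;
conversely the image of an idempotent is a retract of `Sⁿ`. Likewise, internal direct sum
decompositions `Sⁿ = p ⊕ q` are exactly the images of complete pairs of orthogonal idempotents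
`e, f`, obtained by conjugating the two coordinate projections of `p × q`. Endomorphisms of `Sⁿ`
are matrices acting on row vectors from the right; this reverses products, which the
(symmetric) conditions do not see, and the image of `A` is the span of its rows. -/

open LinearMap Submodule

section Endomorphisms

variable {R M : Type*} [Semiring R] [AddCommMonoid M] [Module R M]

theorem Module.Projective.range_of_isIdempotentElem [Module.Projective R M]
    {e : Module.End R M} (he : IsIdempotentElem e) : Module.Projective R (range e) :=
  .of_split (range e).subtype he.isProj_range.codRestrict
    (LinearMap.ext he.isProj_range.codRestrict_apply_cod)

theorem Module.Projective.exists_isIdempotentElem_linearEquiv_range {P : Type*}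
    [AddCommMonoid P] [Module R P] [Module.Projective R P] {f : M →ₗ[R] P}
    (hf : Function.Surjective f) :
    ∃ e : Module.End R M, IsIdempotentElem e ∧ Nonempty (P ≃ₗ[R] range e) := by
  obtain ⟨g, hfg⟩ := projective_lifting_property f LinearMap.id hf
  have hg : Function.Injective g := Function.LeftInverse.injective (LinearMap.congr_fun hfg)
  refine ⟨g ∘ₗ f, ?_, ⟨(LinearEquiv.ofInjective g hg).trans (.ofEq _ _ ?_)⟩⟩
  · change g ∘ₗ f ∘ₗ g ∘ₗ f = g ∘ₗ f
    rw [← comp_assoc f g f, hfg, id_comp]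
  · exact (range_comp_of_range_eq_top g (range_eq_top.2 hf)).symm

theorem LinearEquiv.completeOrthogonalIdempotents_conj_inl_fst {M₁ M₂ : Type*}
    [AddCommMonoid M₁] [Module R M₁] [AddCommMonoid M₂] [Module R M₂] (Φ : (M₁ × M₂) ≃ₗ[R] M) :
    CompleteOrthogonalIdempotents
      ![Φ.conjRingEquiv (inl R M₁ M₂ ∘ₗ fst R M₁ M₂),
        Φ.conjRingEquiv (inr R M₁ M₂ ∘ₗ snd R M₁ M₂)] := by
  have h : CompleteOrthogonalIdempotents
      ![inl R M₁ M₂ ∘ₗ fst R M₁ M₂, inr R M₁ M₂ ∘ₗ snd R M₁ M₂] :=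
    CompleteOrthogonalIdempotents.pair_iff'ₛ.2 ⟨by ext <;> simp, by ext <;> simp, by ext <;> simp⟩
  have hΦ := h.map Φ.conjRingEquiv.toRingHom
  -- `FinVec.map f ![a, b]` unfolds to `![f a, f b]`
  rwa [← FinVec.map_eq] at hΦ

theorem LinearEquiv.range_conjRingEquiv {N : Type*} [AddCommMonoid N] [Module R N]
    (Φ : N ≃ₗ[R] M) (f : Module.End R N) :
    range (Φ.conjRingEquiv f) = range (Φ.toLinearMap ∘ₗ f) :=
  LinearEquiv.range_comp Φ.symm _

end Endomorphisms

section SummandDecomp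

variable {R M : Type} [Semiring R] [AddCommMonoid M] [Module R M]

theorem isSummandDecomp_range {e f : Module.End R M}
    (h : CompleteOrthogonalIdempotents ![e, f]) :
    IsSummandDecomp (range e) (range f) := by
  obtain ⟨hef, hfe, hsum⟩ := CompleteOrthogonalIdempotents.pair_iff'ₛ.1 h
  have he : e * e = e := h.idem 0
  have hf : f * f = f := h.idem 1
  rw [IsSummandDecomp, Function.bijective_iff_has_inverse]
  refine ⟨fun x => ⟨⟨e x, mem_range_self e x⟩, ⟨f x, mem_range_self f x⟩⟩, ?_, fun x => ?_⟩
  · rintro ⟨⟨_, x, rfl⟩, ⟨_, y, rfl⟩⟩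
    ext <;> simp [← Module.End.mul_apply, he, hf, hef, hfe]
  · simp [← LinearMap.add_apply, hsum]

theorem isSummandDecomp_iff {p q : Submodule R M} :
    IsSummandDecomp p q ↔
      ∃ e f : Module.End R M,
        CompleteOrthogonalIdempotents ![e, f] ∧ range e = p ∧ range f = q := by
  refine ⟨fun h => ?_, fun ⟨e, f, h, hp, hq⟩ => hp ▸ hq ▸ isSummandDecomp_range h⟩
  let Φ := LinearEquiv.ofBijective (p.subtype.coprod q.subtype) h
  refine ⟨_, _, Φ.completeOrthogonalIdempotents_conj_inl_fst, ?_, ?_⟩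
  · have hp : Φ.toLinearMap ∘ₗ inl R p q = p.subtype := by ext x; exact add_zero (x : M)
    rw [LinearEquiv.range_conjRingEquiv, ← comp_assoc, hp,
      range_comp_of_range_eq_top _ (range_eq_top.2 fst_surjective), range_subtype]
  · have hq : Φ.toLinearMap ∘ₗ inr R p q = q.subtype := by ext x; exact zero_add (x : M)
    rw [LinearEquiv.range_conjRingEquiv, ← comp_assoc, hq,
      range_comp_of_range_eq_top _ (range_eq_top.2 snd_surjective), range_subtype]

end SummandDecomp

section Matrix

variable {R : Type*} [Semiring R] {m : Type*} [Fintype m] [DecidableEq m]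

theorem Matrix.range_toLinearMapRight' {n : Type*} (A : Matrix m n R) :
    range A.toLinearMapRight' = span R (Set.range fun i => A i) :=
  range_vecMulLinear A

theorem Matrix.isIdempotentElem_toLinearMapRight'_iff {A : Matrix m m R} :
    IsIdempotentElem A.toLinearMapRight' ↔ IsIdempotentElem A := by
  simp only [IsIdempotentElem, Module.End.mul_eq_comp, ← Matrix.toLinearMapRight'_mul,
    Matrix.toLinearMapRight'.injective.eq_iff]

theorem Matrix.completeOrthogonalIdempotents_toLinearMapRight'_iff {A B : Matrix m m R} :
    CompleteOrthogonalIdempotents ![A.toLinearMapRight', B.toLinearMapRight'] ↔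
      CompleteOrthogonalIdempotents ![A, B] := by
  simp only [CompleteOrthogonalIdempotents.pair_iff'ₛ, Module.End.mul_eq_comp,
    ← Matrix.toLinearMapRight'_mul, ← map_add, Module.End.one_eq_id,
    ← Matrix.toLinearMapRight'_one, ← map_zero Matrix.toLinearMapRight',
    Matrix.toLinearMapRight'.injective.eq_iff]
  tauto

end Matrix

theorem Module.Finite.exists_fin_succ_surjective (R M : Type*) [Semiring R] [AddCommMonoid M]
    [Module R M] [Module.Finite R M] :
    ∃ (n : ℕ) (f : (Fin (n + 1) → R) →ₗ[R] M), Function.Surjective f := by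
  obtain ⟨n, f, hf⟩ := Module.Finite.exists_fin' R M
  exact ⟨n, f ∘ₗ funLeft R R Fin.castSucc,
    hf.comp (funLeft_surjective_of_injective R R _ (Fin.castSucc_injective n))⟩

variable {S P : Type} [Semiring S] [AddCommMonoid P] [Module S P]

theorem Module.Projective.exists_idempotent_matrix [Module.Finite S P] [Module.Projective S P] :
    ∃ (n : ℕ) (_ : 0 < n) (A : Matrix (Fin n) (Fin n) S), IsIdempotentElem A ∧
      Nonempty (P ≃ₗ[S] span S (Set.range fun i => A i)) := by
  obtain ⟨n, f, hf⟩ := Module.Finite.exists_fin_succ_surjective S P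
  obtain ⟨e, he, ⟨φ⟩⟩ := exists_isIdempotentElem_linearEquiv_range hf
  obtain ⟨A, rfl⟩ := Matrix.toLinearMapRight'.surjective e
  exact ⟨n + 1, n.succ_pos, A, Matrix.isIdempotentElem_toLinearMapRight'_iff.1 he,
    ⟨φ.trans (.ofEq _ _ A.range_toLinearMapRight')⟩⟩

theorem FGStronglyProjective.exists_completeOrthogonalIdempotents_matrix
    (h : FGStronglyProjective S P) :
    ∃ (n : ℕ) (_ : 0 < n) (A B : Matrix (Fin n) (Fin n) S), CompleteOrthogonalIdempotents ![A, B] ∧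
      Nonempty (P ≃ₗ[S] span S (Set.range fun i => A i)) := by
  obtain ⟨n, p, q, hpq, ⟨φ⟩⟩ := h
  rcases n.eq_zero_or_pos with rfl | hn
  · -- `S⁰ = 0` forces `P = 0`, the image of the zero `1 × 1` matrix
    have : Subsingleton P := φ.toEquiv.subsingleton
    have : Subsingleton (span S (Set.range fun i => (0 : Matrix (Fin 1) (Fin 1) S) i)) :=
      subsingleton_iff_eq_bot.2 (span_eq_bot.2 (by rintro _ ⟨i, rfl⟩; rfl))
    exact ⟨1, one_pos, 0, 1, CompleteOrthogonalIdempotents.pair_iff'ₛ.2 (by simp),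
      ⟨LinearEquiv.ofSubsingleton _ _⟩⟩
  · obtain ⟨e, f, hef, rfl, -⟩ := isSummandDecomp_iff.1 hpq
    obtain ⟨A, rfl⟩ := Matrix.toLinearMapRight'.surjective e
    obtain ⟨B, rfl⟩ := Matrix.toLinearMapRight'.surjective f
    exact ⟨n, hn, A, B, Matrix.completeOrthogonalIdempotents_toLinearMapRight'_iff.1 hef,
      ⟨φ.trans (.ofEq _ _ A.range_toLinearMapRight')⟩⟩

/-- A finitely generated semimodule `P` is projective (resp. strongly projective) iff
`P ≅ A(Sⁿ)` for an idempotent matrix `A` (resp. a strongly idempotent matrix `A`,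
i.e. one with a complementary orthogonal idempotent `B`), where `A(Sⁿ)` is the
subsemimodule of `Sⁿ` generated by the rows of `A`. -/
theorem fg_projective_iff_idempotent_matrix (S P : Type) [Semiring S] [AddCommMonoid P]
    [Module S P] (hfg : Module.Finite S P) :
    (Module.Projective S P ↔
      ∃ (n : ℕ) (_ : 0 < n) (A : Matrix (Fin n) (Fin n) S), A * A = A ∧
        Nonempty (P ≃ₗ[S] (Submodule.span S (Set.range fun i => A i) : Submodule S (Fin n → S))))
    ∧ (FGStronglyProjective S P ↔
      ∃ (n : ℕ) (_ : 0 < n) (A B : Matrix (Fin n) (Fin n) S), A * A = A ∧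
        A + B = 1 ∧ A * B = 0 ∧ B * A = 0 ∧
        Nonempty (P ≃ₗ[S] (Submodule.span S (Set.range fun i => A i) : Submodule S (Fin n → S)))) := by
  refine ⟨⟨fun _ => Module.Projective.exists_idempotent_matrix, ?_⟩, ⟨fun h => ?_, ?_⟩⟩
  · rintro ⟨n, -, A, hA, ⟨φ⟩⟩
    have := Module.Projective.range_of_isIdempotentElem
      (Matrix.isIdempotentElem_toLinearMapRight'_iff.2 hA)
    exact .of_equiv' (φ.trans (.ofEq _ _ A.range_toLinearMapRight'.symm)).symm
  · obtain ⟨n, hn, A, B, hAB, φ⟩ := h.exists_completeOrthogonalIdempotents_matrix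
    obtain ⟨hAB0, hBA0, hsum⟩ := CompleteOrthogonalIdempotents.pair_iff'ₛ.1 hAB
    exact ⟨n, hn, A, B, hAB.idem 0, hsum, hAB0, hBA0, φ⟩
  · rintro ⟨n, -, A, B, -, hsum, hAB0, hBA0, ⟨φ⟩⟩
    have hAB := Matrix.completeOrthogonalIdempotents_toLinearMapRight'_iff.2
      (CompleteOrthogonalIdempotents.pair_iff'ₛ.2 ⟨hAB0, hBA0, hsum⟩)
    exact ⟨n, _, _, isSummandDecomp_range hAB,
      ⟨φ.trans (.ofEq _ _ A.range_toLinearMapRight'.symm)⟩⟩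
end

section
/- Let M = ⊕_{i∈I} T_i be a right S-semimodule that is a direct sum of minimal subsemimodules T_i, and let K ⊆ M be a strong subsemimodule (m + m' ∈ K implies m, m' ∈ K). Then there exists a subset I_K ⊆ I such that M = K ⊕ (⊕_{i∈I_K} T_i) and K ≅ ⊕_{i∈I∖I_K} T_i. -/
open DirectSum

open Function

/-!
Decompose every element of `M` into its components in the `T i`. A strong subsemimodule
contains every component of each of its elements, so `K = ⨆ i, K ⊓ T i`, and by minimality
each `K ⊓ T i` is `⊥` or `T i`; hence `K = ⨆ i ∈ s, T i` for `s = {i | T i ≤ K}`.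
For any `s`, keeping only the components indexed by `s` (resp. `sᶜ`) projects `M` onto
`⨆ i ∈ s, T i` (resp. `⨆ i ∈ sᶜ, T i`), and these two projections split every element uniquely;
moreover `⨁ i : s, T i ≃ ⨆ i ∈ s, T i`. Take `J = sᶜ`.
-/

theorem iSup_inf_eq_biSup_of_isAtom {α ι : Type*} [CompleteLattice α] {a : α} {f : ι → α}
    (hf : ∀ i, IsAtom (f i)) : ⨆ i, a ⊓ f i = ⨆ i ∈ {i | f i ≤ a}, f i := by
  refine le_antisymm (iSup_le fun i => ?_)
    (iSup₂_le fun i hi => le_iSup_of_le i (le_inf hi le_rfl))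
  rcases (hf i).le_iff.1 (inf_le_right : a ⊓ f i ≤ f i) with hbot | hfi
  · exact hbot ▸ bot_le
  · exact le_iSup₂_of_le i (inf_eq_right.1 hfi) inf_le_right

namespace Submodule

variable {R M : Type*} [Semiring R] [AddCommMonoid M] [Module R M]

def IsStrong (K : Submodule R M) : Prop := ∀ m m' : M, m + m' ∈ K → m ∈ K ∧ m' ∈ K

variable {K : Submodule R M}

theorem IsStrong.mem_of_sum_mem {ι : Type*} (hK : K.IsStrong) {s : Finset ι} {f : ι → M}
    (hs : ∑ i ∈ s, f i ∈ K) {i : ι} (hi : i ∈ s) : f i ∈ K := by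
  classical
  exact (hK _ _ (by rwa [Finset.add_sum_erase _ _ hi])).1

theorem IsStrong.isHomogeneous {ι : Type*} [DecidableEq ι] (A : ι → Submodule R M)
    [Decomposition A] (hK : K.IsStrong) : SetLike.IsHomogeneous A K := by
  classical
  intro i m hm
  rw [← sum_support_decompose A m] at hm
  by_cases hi : i ∈ (decompose A m).support
  · exact hK.mem_of_sum_mem hm hi
  · rw [DFinsupp.notMem_support_iff.1 hi]
    exact K.zero_mem

end Submodule

namespace DirectSum

variable {R M ι : Type*} [Semiring R] [AddCommMonoid M] [Module R M] [DecidableEq ι]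
  (A : ι → Submodule R M)

theorem injective_coeLinearMap_subtype (h : Injective (coeLinearMap A)) (s : Set ι) :
    Injective (coeLinearMap fun i : s => A i) := by
  classical
  let extendByZero : (⨁ i : s, A i) →ₗ[R] ⨁ i, A i :=
    toModule R s _ fun i => lof R ι (fun i => A i) i
  have h_comp : coeLinearMap (fun i : s => A i) = coeLinearMap A ∘ₗ extendByZero :=
    linearMap_ext R fun i => by ext; simp [extendByZero]
  have h_restrict : DFinsupp.subtypeDomainLinearMap R _ (· ∈ s) ∘ₗ extendByZero = .id :=
    linearMap_ext R fun i => by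
      ext x j
      simp only [extendByZero, LinearMap.coe_comp, comp_apply, toModule_lof,
        DFinsupp.subtypeDomainLinearMap_apply, DFinsupp.subtypeDomain_apply, LinearMap.id_comp]
      rcases eq_or_ne i j with rfl | hij
      · rw [lof_apply, lof_apply]
      · rw [lof_eq_of, lof_eq_of, of_eq_of_ne _ _ _ (Subtype.val_injective.ne hij.symm),
          of_eq_of_ne _ _ _ hij.symm]
  rw [h_comp]
  exact h.comp (LinearMap.injective_of_comp_eq_id _ _ h_restrict)

variable [Decomposition A]

theorem SetLike.IsHomogeneous.eq_iSup_inf {K : Submodule R M} (hK : SetLike.IsHomogeneous A K) :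
    K = ⨆ i, K ⊓ A i := by
  classical
  refine le_antisymm (fun m hm => ?_) (iSup_le fun _ => inf_le_left)
  rw [← sum_support_decompose A m]
  exact Submodule.sum_mem _ fun i _ => Submodule.mem_iSup_of_mem i ⟨hK i hm, SetLike.coe_mem _⟩

theorem decompose_apply_eq_zero_of_mem_biSup {s : Set ι} {m : M} (hm : m ∈ ⨆ i ∈ s, A i)
    {i : ι} (hi : i ∉ s) : decompose A m i = 0 := by
  have : (⨆ j ∈ s, A j) ≤
      LinearMap.ker (DFinsupp.lapply i ∘ₗ (decomposeLinearEquiv A : M →ₗ[R] ⨁ i, A i)) :=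
    iSup₂_le fun j hj x hx => by
      simpa [decomposeLinearEquiv_apply] using
        decompose_of_mem_ne A hx (ne_of_mem_of_not_mem hj hi)
  simpa [decomposeLinearEquiv_apply] using this hm

noncomputable def biSupEquiv (s : Set ι) : (⨁ i : s, A i) ≃ₗ[R] ↥(⨆ i ∈ s, A i) :=
  (LinearEquiv.ofInjective _
      (injective_coeLinearMap_subtype A (Decomposition.isInternal A).injective s)).trans
    (LinearEquiv.ofEq _ _ (range_coeLinearMap.trans iSup_subtype))

section projBiSup

variable (s : Set ι) [DecidablePred (· ∈ s)]

noncomputable def projBiSup : M →ₗ[R] M :=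
  ((decomposeLinearEquiv A).symm : (⨁ i, A i) →ₗ[R] M) ∘ₗ
    DFinsupp.filterLinearMap R _ (· ∈ s) ∘ₗ (decomposeLinearEquiv A : M →ₗ[R] ⨁ i, A i)

theorem projBiSup_apply (m : M) :
    projBiSup A s m = (decompose A).symm ((decompose A m).filter (· ∈ s)) :=
  rfl

theorem projBiSup_mem (m : M) : projBiSup A s m ∈ ⨆ i ∈ s, A i :=
  (Submodule.mem_biSup_iff_exists_dfinsupp _ _ _).2 ⟨decompose A m, rfl⟩

theorem projBiSup_add_projBiSup_compl (m : M) : projBiSup A s m + projBiSup A sᶜ m = m := by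
  rw [projBiSup_apply, projBiSup_apply, ← decompose_symm_add]
  convert (decompose A).symm_apply_apply m using 2
  exact DFinsupp.filter_add_filter_not _ (· ∈ s)

variable {s}

theorem projBiSup_eq_self {m : M} (hm : m ∈ ⨆ i ∈ s, A i) : projBiSup A s m = m := by
  suffices (decompose A m).filter (· ∈ s) = decompose A m by
    rw [projBiSup_apply, this, Equiv.symm_apply_apply]
  ext i : 1
  by_cases hi : i ∈ s
  · exact DFinsupp.filter_apply_pos _ hi
  · rw [DFinsupp.filter_apply_neg _ hi, decompose_apply_eq_zero_of_mem_biSup A hm hi]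

theorem projBiSup_eq_zero {m : M} (hm : m ∈ ⨆ i ∈ sᶜ, A i) : projBiSup A s m = 0 := by
  suffices (decompose A m).filter (· ∈ s) = 0 by
    rw [projBiSup_apply, this, decompose_symm_zero]
  ext i : 1
  by_cases hi : i ∈ s
  · exact (DFinsupp.filter_apply_pos _ hi).trans
      (decompose_apply_eq_zero_of_mem_biSup A hm (not_not_intro hi))
  · exact DFinsupp.filter_apply_neg _ hi

end projBiSup

theorem bijective_add_biSup_compl (s : Set ι) :
    Bijective fun ab : ↥(⨆ i ∈ s, A i) × ↥(⨆ i ∈ sᶜ, A i) => (ab.1 : M) + ab.2 := by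
  classical
  refine bijective_iff_has_inverse.2
    ⟨fun m => (⟨projBiSup A s m, projBiSup_mem A s m⟩, ⟨projBiSup A sᶜ m, projBiSup_mem A sᶜ m⟩),
      fun ⟨a, b⟩ => ?_, projBiSup_add_projBiSup_compl A s⟩
  ext <;> simp [projBiSup_eq_self, projBiSup_eq_zero]

end DirectSum

/-- If `M = ⊕_{i ∈ ι} T i` is a direct sum of minimal subsemimodules and `K` is a
strong subsemimodule of `M`, then there is a subset `J ⊆ ι` with
`M = K ⊕ (⊕_{i ∈ J} T i)` and `K ≅ ⊕_{i ∈ ιᶜJ} T i`. -/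
theorem strong_submodule_complement (S M ι : Type) [Semiring S] [AddCommMonoid M]
    [Module S M] [DecidableEq ι] (T : ι → Submodule S M)
    (hmin : ∀ i, T i ≠ ⊥ ∧ ∀ N : Submodule S M, N ≤ T i → N = ⊥ ∨ N = T i)
    (hint : DirectSum.IsInternal T)
    (K : Submodule S M) (hK : ∀ m m' : M, m + m' ∈ K → m ∈ K ∧ m' ∈ K) :
    ∃ J : Set ι,
      (Function.Bijective fun ab : K × ↥(⨆ i ∈ J, T i) => (ab.1 : M) + (ab.2 : M)) ∧
      Nonempty (K ≃ₗ[S] ⨁ i : ↥(Jᶜ), T i.1) := by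
  let _ : Decomposition T := hint.chooseDecomposition
  have hatom : ∀ i, IsAtom (T i) := fun i =>
    ⟨(hmin i).1, fun N hN => ((hmin i).2 N hN.le).resolve_right hN.ne⟩
  obtain ⟨s, rfl⟩ : ∃ s : Set ι, K = ⨆ i ∈ s, T i :=
    ⟨_, (Submodule.IsStrong.isHomogeneous T hK).eq_iSup_inf.trans
      (iSup_inf_eq_biSup_of_isAtom hatom)⟩
  refine ⟨sᶜ, bijective_add_biSup_compl T s, ?_⟩
  rw [compl_compl]
  exact ⟨(biSupEquiv T s).symm⟩
end

section
/- Every strongly projective right D-semimodule over a division semiring D is free. In particular, a finitely generated right D-semimodule P is strongly projective if and only if P ≅ Dⁿ for a unique nonnegative integer n. -/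
/- ### Auxiliary lemmas -/

/-- In the presence of `1 + n = 0`, a division semiring is a division ring and every
semimodule over it is free. -/
lemma aux_ring_case {D : Type} [ds : DivisionSemiring D] {n : D} (hn : 1 + n = 0)
    (P : Type) [acm : AddCommMonoid P] [mod : Module D P] :
    ∃ κ : Type, Nonempty (P ≃ₗ[D] (κ →₀ D)) := by
  have hn' : n + 1 = 0 := by rwa [add_comm] at hn
  have hD : ∀ a : D, n * a + a = 0 := fun a => by
    calc n * a + a = (n + 1) * a := by rw [add_mul, one_mul]
    _ = 0 := by rw [hn', zero_mul]
  have hP : ∀ x : P, n • x + x = 0 := fun x => by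
    calc n • x + x = (n + 1) • x := by rw [add_smul, one_smul]
    _ = 0 := by rw [hn', zero_smul]
  letI : Neg D := ⟨fun a => n * a⟩
  letI : Neg P := ⟨fun x => n • x⟩
  letI dr : DivisionRing D :=
    { ds with
      neg := fun a => n * a
      zsmul := zsmulRec
      qsmul := _
      nnqsmul := _
      neg_add_cancel := hD }
  letI ag : AddCommGroup P :=
    { acm with
      neg := fun x => n • x
      zsmul := zsmulRec
      neg_add_cancel := hP }
  letI mod2 : Module D P := mod
  letI : Module.Free D P := Module.Free.of_divisionRing D P
  obtain ⟨⟨κ, b⟩⟩ := ‹Module.Free D P›.exists_basis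
  exact ⟨κ, ⟨b.repr⟩⟩

/-- In a zerosumfree setting, a sum which is zero has all terms zero. -/
lemma aux_sum_eq_zero {D : Type} [AddCommMonoid D] (hzs : ∀ a b : D, a + b = 0 → a = 0)
    {α : Type} {s : Finset α} {g : α → D} (hsum : ∑ i ∈ s, g i = 0) :
    ∀ k ∈ s, g k = 0 := by
  classical
  intro k hk
  exact hzs _ _ (by rw [Finset.add_sum_erase _ _ hk, hsum])

/-- A direct summand of a free semimodule over a zerosumfree division semiring is free. -/
lemma aux_zsf_case {D : Type} [DivisionSemiring D] (hzs : ∀ a b : D, a + b = 0 → a = 0)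
    {ι : Type} (p q : Submodule D (ι →₀ D)) (h : IsSummandDecomp p q) :
    ∃ κ : Type, Nonempty ((↥p) ≃ₗ[D] (κ →₀ D)) := by
  classical
  have hdec : ∀ i : ι, ∃ ab : (↥p) × (↥q),
      ((ab.1 : ι →₀ D) + (ab.2 : ι →₀ D)) = Finsupp.single i 1 := fun i => h.2 _
  choose ab hab using hdec
  set c : ι → D := fun i => ((ab i).1 : ι →₀ D) i with hc
  -- each `a_i` is supported at `i`
  have ha : ∀ i : ι, ((ab i).1 : ι →₀ D) = Finsupp.single i (c i) := by
    intro i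
    ext j
    rcases eq_or_ne i j with rfl | hij
    · simp [hc]
    · have h0 : ((ab i).1 : ι →₀ D) j + ((ab i).2 : ι →₀ D) j = 0 := by
        have := congrFun (congrArg (fun f : ι →₀ D => (f : ι → D)) (hab i)) j
        simpa [Finsupp.single_apply, hij] using this
      rw [Finsupp.single_apply, if_neg hij]
      exact hzs _ _ h0
  set S : Set ι := {i | Finsupp.single i (1 : D) ∈ p} with hS
  -- outside `S` the coefficients vanish
  have hcS : ∀ i ∉ S, c i = 0 := by
    intro i hi
    by_contra hci
    exact hi (by
      have : (c i)⁻¹ • ((ab i).1 : ι →₀ D) = Finsupp.single i 1 := by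
        rw [ha i, Finsupp.smul_single, smul_eq_mul, inv_mul_cancel₀ hci]
      show Finsupp.single i (1 : D) ∈ p
      rw [← this]
      exact p.smul_mem _ (ab i).1.2)
  -- every element of `p` is supported in `S`
  have hsub : ∀ x : ι →₀ D, x ∈ p → ∀ j ∉ S, x j = 0 := by
    intro x hx j hj
    -- decompose x two ways
    have hxsum : (x.sum fun i cc => cc • ((ab i).1 : ι →₀ D)) +
        (x.sum fun i cc => cc • ((ab i).2 : ι →₀ D)) = x := by
      rw [← Finsupp.sum_add]
      calc x.sum (fun i cc => cc • ((ab i).1 : ι →₀ D) + cc • ((ab i).2 : ι →₀ D))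
          = x.sum (fun i cc => Finsupp.single i cc) := by
            apply Finsupp.sum_congr
            intro i _
            rw [← smul_add, hab i, Finsupp.smul_single, smul_eq_mul, mul_one]
      _ = x := Finsupp.sum_single x
    have hmem1 : (x.sum fun i cc => cc • ((ab i).1 : ι →₀ D)) ∈ p :=
      Submodule.sum_mem p fun i _ => p.smul_mem _ (ab i).1.2
    have hmem2 : (x.sum fun i cc => cc • ((ab i).2 : ι →₀ D)) ∈ q :=
      Submodule.sum_mem q fun i _ => q.smul_mem _ (ab i).2.2
    have hkey : (⟨x, hx⟩ : ↥p) = ⟨_, hmem1⟩ ∧ ((0 : ↥q) = ⟨_, hmem2⟩) := by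
      have := h.1 (a₁ := (⟨x, hx⟩, 0)) (a₂ := (⟨_, hmem1⟩, ⟨_, hmem2⟩)) (by
        show x + 0 = _
        rw [add_zero]
        exact hxsum.symm)
      exact ⟨congrArg Prod.fst this, congrArg Prod.snd this⟩
    have hxeq : x = x.sum fun i cc => cc • ((ab i).1 : ι →₀ D) :=
      congrArg Subtype.val hkey.1
    -- evaluate at j
    have : x j = x.sum fun i cc => (cc • ((ab i).1 : ι →₀ D)) j := by
      conv_lhs => rw [hxeq]
      exact Finsupp.sum_apply
    rw [this]
    apply Finset.sum_eq_zero
    intro i _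
    show ((x i) • ((ab i).1 : ι →₀ D)) j = 0
    rw [ha i, Finsupp.smul_single, Finsupp.single_apply]
    rcases eq_or_ne i j with rfl | hij
    · rw [if_pos rfl, smul_eq_mul, hcS i hj, mul_zero]
    · rw [if_neg hij]
  have hpeq : p = Finsupp.supported D D S := by
    apply le_antisymm
    · intro x hx
      rw [Finsupp.mem_supported]
      intro j hjs
      by_contra hj
      exact (Finsupp.mem_support_iff.mp hjs) (hsub x hx j hj)
    · rw [Finsupp.supported_eq_span_single, Submodule.span_le]
      rintro y ⟨i, hi, rfl⟩
      exact hi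
  exact ⟨↥S, ⟨(LinearEquiv.ofEq p _ hpeq).trans (Finsupp.supportedEquivFinsupp S)⟩⟩

/-- Strongly projective semimodules over a division semiring are free. -/
lemma aux_free {D P : Type} [DivisionSemiring D] [AddCommMonoid P] [Module D P]
    (hsp : StronglyProjective D P) : ∃ ι : Type, Nonempty (P ≃ₗ[D] (ι →₀ D)) := by
  by_cases hzs : ∀ a b : D, a + b = 0 → a = 0
  · obtain ⟨ι, p, q, hpq, ⟨e⟩⟩ := hsp
    obtain ⟨κ, ⟨f⟩⟩ := aux_zsf_case hzs p q hpq
    exact ⟨κ, ⟨e.trans f⟩⟩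
  · push_neg at hzs
    obtain ⟨a, b, hab, ha⟩ := hzs
    have h1 : (1 : D) + b * a⁻¹ = 0 := by
      have : (a + b) * a⁻¹ = 0 := by rw [hab, zero_mul]
      rwa [add_mul, mul_inv_cancel₀ ha] at this
    exact aux_ring_case h1 P

/-- Invariant basis number, one inequality, for zerosumfree division semirings. -/
lemma aux_ibn_le {D : Type} [DivisionSemiring D] (hzs : ∀ a b : D, a + b = 0 → a = 0)
    {m n : ℕ} (f : (Fin m → D) ≃ₗ[D] (Fin n → D)) : n ≤ m := by
  classical
  set u : Fin m → Fin n → D := fun k => f (Pi.single k 1) with hu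
  set x : Fin n → Fin m → D := fun i => f.symm (Pi.single i 1) with hx
  have hsm : ∀ (k : Fin m) (cc : D), (Pi.single k cc : Fin m → D) = cc • (Pi.single k (1 : D) : Fin m → D) := by
    intro k cc
    ext j'
    simp [Pi.single_apply, Pi.smul_apply, mul_ite, mul_one, mul_zero]
  have hexp : ∀ (i : Fin n) (j : Fin n),
      ∑ k : Fin m, x i k * u k j = if j = i then 1 else 0 := by
    intro i j
    have h1 : f (x i) = Pi.single i 1 := f.apply_symm_apply _
    have h2 : f (x i) = ∑ k : Fin m, x i k • u k := by
      conv_lhs => rw [show x i = ∑ k : Fin m, Pi.single k (x i k) from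
        (Finset.univ_sum_single (x i)).symm]
      rw [map_sum]
      apply Finset.sum_congr rfl
      intro k _
      rw [hsm k (x i k), map_smul]
    have h3 := congrFun (h2.symm.trans h1) j
    rw [Pi.single_apply] at h3
    rw [← h3, Finset.sum_apply]
    apply Finset.sum_congr rfl
    intro k _
    rw [Pi.smul_apply, smul_eq_mul]
  have hone : ∀ i : Fin n, ∃ k : Fin m, x i k * u k i ≠ 0 := by
    intro i
    by_contra hc
    push_neg at hc
    have h4 := hexp i i
    rw [Finset.sum_eq_zero (fun k _ => hc k), if_pos rfl] at h4
    exact one_ne_zero h4.symm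
  choose g hg using hone
  have hginj : Function.Injective g := by
    intro i i' hii'
    by_contra hne
    have hz : x i (g i) * u (g i) i' = 0 := by
      have h5 := hexp i i'
      rw [if_neg (fun hh => hne hh.symm)] at h5
      exact aux_sum_eq_zero hzs h5 (g i) (Finset.mem_univ _)
    have hx1 : x i (g i) ≠ 0 := fun hh => hg i (by rw [hh, zero_mul])
    have hu1 : u (g i) i' ≠ 0 := fun hh => hg i' (by rw [← hii', hh, mul_zero])
    exact (mul_ne_zero hx1 hu1) hz
  simpa using Fintype.card_le_of_injective g hginj

/-- Invariant basis number for division semirings. -/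
lemma aux_ibn {D : Type} [ds : DivisionSemiring D]
    {m n : ℕ} (f : (Fin m → D) ≃ₗ[D] (Fin n → D)) : m = n := by
  by_cases hzs : ∀ a b : D, a + b = 0 → a = 0
  · exact le_antisymm (aux_ibn_le hzs f.symm) (aux_ibn_le hzs f)
  · push_neg at hzs
    obtain ⟨a, b, hab, ha⟩ := hzs
    have h1 : (1 : D) + b * a⁻¹ = 0 := by
      have : (a + b) * a⁻¹ = 0 := by rw [hab, zero_mul]
      rwa [add_mul, mul_inv_cancel₀ ha] at this
    set nn := b * a⁻¹ with hnn
    have hn' : nn + 1 = 0 := by rwa [add_comm] at h1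
    have hD : ∀ a : D, nn * a + a = 0 := fun a => by
      calc nn * a + a = (nn + 1) * a := by rw [add_mul, one_mul]
      _ = 0 := by rw [hn', zero_mul]
    letI : Neg D := ⟨fun a => nn * a⟩
    letI dr : DivisionRing D :=
      { ds with
        neg := fun a => nn * a
        zsmul := zsmulRec
        qsmul := _
        nnqsmul := _
        neg_add_cancel := hD }
    exact eq_of_fin_equiv D f

/-- Every strongly projective semimodule over a division semiring is free; a finitely
generated semimodule `P` over a division semiring `D` is strongly projective iff
`P ≅ Dⁿ` for a unique nonnegative integer `n`. -/
theorem stronglyProjective_over_divisionSemiring (D P : Type) [DivisionSemiring D]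
    [AddCommMonoid P] [Module D P] :
    (StronglyProjective D P → ∃ ι : Type, Nonempty (P ≃ₗ[D] (ι →₀ D))) ∧
    (Module.Finite D P →
      (StronglyProjective D P ↔ ∃! n : ℕ, Nonempty (P ≃ₗ[D] (Fin n → D)))) := by
  constructor
  · exact aux_free
  · intro hfin
    constructor
    · intro hsp
      obtain ⟨ι, ⟨e⟩⟩ := aux_free hsp
      haveI : Module.Finite D (ι →₀ D) := Module.Finite.equiv e
      haveI : Finite ι := Module.Finite.finite_basis (Finsupp.basisSingleOne (R := D) (ι := ι))
      haveI : Fintype ι := Fintype.ofFinite ι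
      refine ⟨Fintype.card ι, ⟨?_⟩, ?_⟩
      · exact (e.trans (Finsupp.linearEquivFunOnFinite D D ι)).trans
          (LinearEquiv.funCongrLeft D D (Fintype.equivFin ι).symm)
      · rintro m ⟨g⟩
        exact aux_ibn ((((e.trans (Finsupp.linearEquivFunOnFinite D D ι)).trans
          (LinearEquiv.funCongrLeft D D (Fintype.equivFin ι).symm)).symm.trans g).symm ≪≫ₗ
          (LinearEquiv.refl D _)) |>.symm ▸ rfl
    · rintro ⟨n, ⟨e⟩, -⟩
      refine ⟨Fin n, ⊤, ⊥, ?_, ⟨?_⟩⟩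
      · constructor
        · rintro ⟨a, b⟩ ⟨a', b'⟩ hh
          have hb : b = 0 := Subsingleton.elim _ _
          have hb' : b' = 0 := Subsingleton.elim _ _
          subst hb hb'
          simp only [Submodule.coe_zero, add_zero] at hh
          exact Prod.ext (Subtype.ext hh) rfl
        · intro y
          exact ⟨(⟨y, trivial⟩, 0), by simp⟩
      · exact (e.trans (Finsupp.linearEquivFunOnFinite D D (Fin n)).symm).trans
          (LinearEquiv.ofTop ⊤ rfl).symm
end

section
/- Every commutative semiring has the invariant basis number property: if Sᵐ ≅ Sⁿ as S-semimodules for a commutative semiring S, then m = n. -/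
section Aux

variable {S : Type} [CommSemiring S]

/-- The conditions for a proper "saturated ideal" of a commutative semiring. -/
def IsSatIdeal (P : Set S) : Prop :=
  (0 : S) ∈ P ∧ (∀ a b : S, a ∈ P → b ∈ P → a + b ∈ P) ∧
    (∀ s a : S, a ∈ P → s * a ∈ P) ∧ (∀ a b : S, a + b ∈ P → a ∈ P) ∧ (1 : S) ∉ P

theorem sum_mem_satIdeal {P : Set S} (hP : IsSatIdeal P) {ι : Type} (t : Finset ι)
    (f : ι → S) (h : ∀ i ∈ t, f i ∈ P) : (∑ i ∈ t, f i) ∈ P :=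
  Finset.sum_induction f (· ∈ P) (fun a b ha hb => hP.2.1 a b ha hb) hP.1 h

theorem mem_of_sum_mem_satIdeal {P : Set S} (hP : IsSatIdeal P) {ι : Type} [DecidableEq ι]
    {t : Finset ι} {f : ι → S} (h : (∑ i ∈ t, f i) ∈ P) {i : ι} (hi : i ∈ t) : f i ∈ P := by
  refine hP.2.2.2.1 (f i) (∑ j ∈ t.erase i, f j) ?_
  rwa [Finset.add_sum_erase _ _ hi]

/-- Existence of a maximal saturated proper ideal, which is moreover prime,
assuming `1` has no additive inverse. -/
theorem exists_prime_satIdeal (h1 : ¬∃ y : S, 1 + y = 0) :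
    ∃ P : Set S, IsSatIdeal P ∧ ∀ a b : S, a * b ∈ P → a ∈ P ∨ b ∈ P := by
  set C : Set (Set S) := {P | IsSatIdeal P} with hC
  have hP0 : ({x : S | ∃ y, x + y = 0} : Set S) ∈ C := by
    refine ⟨⟨0, by simp⟩, ?_, ?_, ?_, ?_⟩
    · rintro a b ⟨ya, ha⟩ ⟨yb, hb⟩
      exact ⟨ya + yb, by rw [show a + b + (ya + yb) = (a + ya) + (b + yb) by ring, ha, hb, add_zero]⟩
    · rintro s a ⟨ya, ha⟩
      exact ⟨s * ya, by rw [← mul_add, ha, mul_zero]⟩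
    · rintro a b ⟨yc, hc⟩
      exact ⟨b + yc, by rw [← add_assoc, hc]⟩
    · exact h1
  have hchainub : ∀ c ⊆ C, IsChain (· ⊆ ·) c → c.Nonempty → ∃ ub ∈ C, ∀ s ∈ c, s ⊆ ub := by
    intro c hcC hchain hcne
    obtain ⟨Q0, hQ0c⟩ := hcne
    refine ⟨⋃₀ c, ⟨?_, ?_, ?_, ?_, ?_⟩, fun s hs => Set.subset_sUnion_of_mem hs⟩
    · exact ⟨Q0, hQ0c, (hcC hQ0c).1⟩
    · rintro a b ⟨Pa, hPa, ha⟩ ⟨Pb, hPb, hb⟩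
      rcases hchain.total hPa hPb with h | h
      · exact ⟨Pb, hPb, (hcC hPb).2.1 a b (h ha) hb⟩
      · exact ⟨Pa, hPa, (hcC hPa).2.1 a b ha (h hb)⟩
    · rintro s a ⟨Pa, hPa, ha⟩
      exact ⟨Pa, hPa, (hcC hPa).2.2.1 s a ha⟩
    · rintro a b ⟨Pa, hPa, ha⟩
      exact ⟨Pa, hPa, (hcC hPa).2.2.2.1 a b ha⟩
    · rintro ⟨Pa, hPa, ha⟩
      exact (hcC hPa).2.2.2.2 ha
  obtain ⟨M, -, hMmax⟩ := zorn_subset_nonempty C hchainub _ hP0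
  have hMC : IsSatIdeal M := hMmax.prop
  refine ⟨M, hMC, ?_⟩
  by_contra hcon
  push_neg at hcon
  obtain ⟨a, b, hab, haM, hbM⟩ := hcon
  have key : ∀ x : S, x ∉ M → ∃ u m s : S, m ∈ M ∧ 1 + u = m + s * x := by
    intro x hx
    set J : Set S := {z | ∃ u m s : S, m ∈ M ∧ z + u = m + s * x} with hJ
    have hMJ : M ⊆ J := fun m hm => ⟨0, m, 0, hm, by ring⟩
    have hxJ : x ∈ J := ⟨0, 0, 1, hMC.1, by ring⟩
    by_cases h1J : (1 : S) ∈ J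
    · exact h1J
    exfalso
    have hJC : J ∈ C := by
      refine ⟨hMJ hMC.1, ?_, ?_, ?_, h1J⟩
      · rintro z w ⟨u, mm, s, hm, hz⟩ ⟨u', m', s', hm', hw⟩
        exact ⟨u + u', mm + m', s + s', hMC.2.1 _ _ hm hm',
          by rw [show z + w + (u + u') = (z + u) + (w + u') by ring, hz, hw]; ring⟩
      · rintro t z ⟨u, mm, s, hm, hz⟩
        exact ⟨t * u, t * mm, t * s, hMC.2.2.1 t mm hm, by rw [← mul_add, hz]; ring⟩
      · rintro z w ⟨u, mm, s, hm, hz⟩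
        exact ⟨w + u, mm, s, hm, by rw [← add_assoc, hz]⟩
    have := hMmax.eq_of_subset hJC hMJ
    rw [← this] at hxJ
    exact hx hxJ
  obtain ⟨u, m, s, hm, hu⟩ := key a haM
  obtain ⟨v, m', t, hm', hv⟩ := key b hbM
  have hprod : (1 : S) + (u + v + u * v) ∈ M := by
    have e1 : (1 : S) + (u + v + u * v) = (1 + u) * (1 + v) := by ring
    have e2 : (m + s * a) * (m' + t * b) =
        (m' + t * b) * m + ((s * a) * m' + (s * t) * (a * b)) := by ring
    rw [e1, hu, hv, e2]
    refine hMC.2.1 _ _ (hMC.2.2.1 _ _ hm) (hMC.2.1 _ _ (hMC.2.2.1 _ _ hm') (hMC.2.2.1 _ _ hab))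
  exact hMC.2.2.2.2 (hMC.2.2.2.1 _ _ hprod)

end Aux

theorem le_of_matrices {S : Type} [CommSemiring S] {P : Set S} (hP : IsSatIdeal P)
    (hprime : ∀ a b : S, a * b ∈ P → a ∈ P ∨ b ∈ P) {m n : ℕ}
    (A : Matrix (Fin n) (Fin m) S) (B : Matrix (Fin m) (Fin n) S)
    (hAB : A * B = 1) : n ≤ m := by
  have hex : ∀ i : Fin n, ∃ j : Fin m, A i j * B j i ∉ P := by
    intro i
    by_contra h
    push_neg at h
    have : (A * B) i i ∈ P := by
      rw [Matrix.mul_apply]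
      exact sum_mem_satIdeal hP _ _ fun j _ => h j
    rw [hAB] at this
    simp [Matrix.one_apply] at this
    exact hP.2.2.2.2 this
  choose f hf using hex
  have hinj : Function.Injective f := by
    intro i₁ i₂ hf12
    by_contra hne
    have hA : A i₁ (f i₁) ∉ P := by
      intro h
      exact hf i₁ (by rw [mul_comm]; exact hP.2.2.1 _ _ h)
    have hB : B (f i₂) i₂ ∉ P := by
      intro h
      exact hf i₂ (hP.2.2.1 _ _ h)
    have hterm : A i₁ (f i₁) * B (f i₁) i₂ ∉ P := by
      rw [hf12]
      intro h
      rcases hprime _ _ h with h | h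
      · rw [← hf12] at h; exact hA h
      · exact hB h
    apply hterm
    have hz : (A * B) i₁ i₂ ∈ P := by
      rw [hAB, Matrix.one_apply_ne hne]
      exact hP.1
    rw [Matrix.mul_apply] at hz
    exact mem_of_sum_mem_satIdeal hP hz (Finset.mem_univ _)
  simpa using Fintype.card_le_of_injective f hinj

theorem commSemiring_hasIBN' (S : Type) [inst : CommSemiring S] [Nontrivial S] :
    ∀ m n : ℕ, Nonempty ((Fin m → S) ≃ₗ[S] (Fin n → S)) → m = n := by
  intro m n ⟨e⟩
  by_cases h1 : ∃ y : S, 1 + y = 0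
  · obtain ⟨y, hy⟩ := h1
    letI : Neg S := ⟨fun x => y * x⟩
    letI rS : CommRing S :=
      { inst with
        neg := fun x => y * x
        zsmul := zsmulRec
        neg_add_cancel := fun x => by
          show y * x + x = 0
          calc y * x + x = (1 + y) * x := by ring
          _ = 0 := by rw [hy, zero_mul] }
    haveI : InvariantBasisNumber S := inferInstance
    exact eq_of_fin_equiv S e
  · obtain ⟨P, hP, hprime⟩ := exists_prime_satIdeal h1
    set A := LinearMap.toMatrix' (e.toLinearMap) with hA
    set B := LinearMap.toMatrix' (e.symm.toLinearMap) with hB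
    have hAB : A * B = 1 := by
      rw [hA, hB, ← LinearMap.toMatrix'_comp, LinearEquiv.comp_coe,
        LinearEquiv.symm_trans_self, LinearEquiv.refl_toLinearMap, LinearMap.toMatrix'_id]
    have hBA : B * A = 1 := by
      rw [hA, hB, ← LinearMap.toMatrix'_comp, LinearEquiv.comp_coe,
        LinearEquiv.self_trans_symm, LinearEquiv.refl_toLinearMap, LinearMap.toMatrix'_id]
    exact le_antisymm (le_of_matrices hP hprime B A hBA) (le_of_matrices hP hprime A B hAB)

/-- A semiring has the invariant basis number (IBN) property if free semimodules of
distinct finite ranks are non-isomorphic. -/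
def HasIBN (S : Type) [Semiring S] : Prop :=
  ∀ m n : ℕ, Nonempty ((Fin m → S) ≃ₗ[S] (Fin n → S)) → m = n

/-- Every (nontrivial) commutative semiring has the invariant basis number property. -/
theorem commSemiring_hasIBN (S : Type) [CommSemiring S] [Nontrivial S] : HasIBN S := by
  exact commSemiring_hasIBN' S
end

section
/- Every division semiring has the invariant basis number property: if Dᵐ ≅ Dⁿ as right D-semimodules for a division semiring D, then m = n. -/
theorem InvariantBasisNumber.of_ringHom {R S : Type*} [Semiring R] [Semiring S]
    [InvariantBasisNumber S] (f : R →+* S) : InvariantBasisNumber R := by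
  refine invariantBasisNumber_iff_matrix.mpr fun n m A B hAB hBA => ?_
  have map_eq_one {k : ℕ} {C : Matrix (Fin k) (Fin k) R} (hC : C = 1) : C.map f = 1 := by
    rw [hC, Matrix.map_one f f.map_zero f.map_one]
  exact invariantBasisNumber_iff_matrix.mp ‹_› n m (A.map f) (B.map f)
    (by rw [← Matrix.map_mul, map_eq_one hAB]) (by rw [← Matrix.map_mul, map_eq_one hBA])

section NonzeroIndicator

variable (R S : Type*) [Semiring R] [NoZeroDivisors R] [Nontrivial R]
  [Subsingleton (AddUnits R)] [IdemSemiring S]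

open Classical in
noncomputable def nonzeroIndicator : R →+* S where
  toFun x := if x = 0 then 0 else 1
  map_zero' := if_pos rfl
  map_one' := if_neg one_ne_zero
  map_mul' a b := by
    by_cases ha : a = 0 <;> by_cases hb : b = 0 <;> simp [ha, hb]
  map_add' a b := by
    by_cases ha : a = 0 <;> by_cases hb : b = 0 <;> simp [ha, hb, add_eq_zero, add_idem]

end NonzeroIndicator

instance {α : Type*} [Nonempty α] : Nontrivial (SetSemiring α) := inferInstanceAs (Nontrivial (Set α))

theorem isAddUnit_one_of_ne_zero {D : Type*} [DivisionSemiring D] {a : D}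
    (ha : IsAddUnit a) (ha₀ : a ≠ 0) : IsAddUnit (1 : D) := by
  simpa [inv_mul_cancel₀ ha₀] using ha.mul_left a⁻¹

noncomputable abbrev DivisionSemiring.toDivisionRingOfIsAddUnitOne {D : Type*}
    [hD : DivisionSemiring D] (h : IsAddUnit (1 : D)) : DivisionRing D :=
  letI : Neg D := ⟨fun x => ↑(-h.addUnit) * x⟩
  { hD with
    zsmul := zsmulRec
    neg_add_cancel x := by
      change ↑(-h.addUnit) * x + x = 0
      calc ↑(-h.addUnit) * x + x = (↑(-h.addUnit) + ↑h.addUnit) * x := by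
            rw [add_mul, h.addUnit_spec, one_mul]
        _ = 0 := by rw [AddUnits.neg_add, zero_mul]
    qsmul := _ }

theorem DivisionSemiring.invariantBasisNumber_of_isAddUnit_one {D : Type*} [DivisionSemiring D]
    (h : IsAddUnit (1 : D)) : InvariantBasisNumber D :=
  letI := toDivisionRingOfIsAddUnitOne h
  inferInstance

/-- Every division semiring has the invariant basis number property. -/
theorem divisionSemiring_hasIBN (D : Type) [DivisionSemiring D] : HasIBN D := by
  rintro m n ⟨e⟩
  suffices InvariantBasisNumber D from eq_of_fin_equiv D e
  by_cases hD : Subsingleton (AddUnits D)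
  · exact .of_ringHom (nonzeroIndicator D (SetSemiring Unit))
  · have := not_subsingleton_iff_nontrivial.mp hD
    obtain ⟨u, hu⟩ := exists_ne (0 : AddUnits D)
    exact DivisionSemiring.invariantBasisNumber_of_isAddUnit_one
      (isAddUnit_one_of_ne_zero u.isAddUnit fun hu₀ => hu (AddUnits.ext hu₀))
end

section
/- Let F be a semifield, let R = M_{n₁}(F) × ⋯ × M_{n_r}(F) be a matricial F-algebra, and let φ: R → S be an F-algebra homomorphism into a matricial F-algebra S. Then φ(R) ≅ ∏_{j∈J} M_{n_j}(F) for some subset J ⊆ {1,…,r}; in particular, φ(R) is a matricial F-algebra. -/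
/-!
Let `J` be the set of indices `i` with `φ(eᵢ) ≠ 0`, where `eᵢ` is the unit of the `i`-th factor.
Since `φ(Pi.single i (x i)) = φ(eᵢ) φ(x)`, the factors outside `J` are killed by `φ`. On a factor
`Mₙ(F)` inside `J`, `φ` is injective: the matrix units isolate each entry `x_kl` as a scalar
multiple `x_kl • φ(E_kk)` of a nonzero element, and in a matricial algebra over a semifield
scalars cancel against nonzero elements. Hence `φ` identifies exactly those elements that agree
on `J`, i.e. it has the same kernel congruence as the projection onto `∏_{j ∈ J} M_{n_j}(F)`,
and the two images are isomorphic.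
-/

open Function

theorem Matrix.pi_smul_left_injective {ι F : Type*} {m n : ι → Type*} [Semifield F]
    {x : ∀ i, Matrix (m i) (n i) F} (hx : x ≠ 0) : Injective fun c : F => c • x := by
  obtain ⟨i, hi⟩ := Function.ne_iff.1 hx
  obtain ⟨k, hk⟩ := Function.ne_iff.1 hi
  obtain ⟨l, hl⟩ := Function.ne_iff.1 hk
  intro c d h
  exact mul_right_cancel₀ hl (congr_fun (congr_fun (congr_fun h i) k) l)

theorem Matrix.nonUnitalAlgHom_injective_of_map_one_ne_zero {n F S : Type*} [Fintype n]
    [DecidableEq n] [Semifield F] [Semiring S] [Module F S]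
    (hS : ∀ u : S, u ≠ 0 → Injective fun c : F => c • u)
    (g : Matrix n n F →ₙₐ[F] S) (hg : g 1 ≠ 0) : Injective g := by
  intro x y hxy
  ext k l
  have hunit : g (single k k 1) ≠ 0 := by
    intro h0
    refine hg ?_
    have hdiag : ∀ p, single p p (1 : F) = single p k 1 * single k k 1 * single k p 1 := by
      simp
    rw [← Matrix.sum_single_one, map_sum]
    exact Finset.sum_eq_zero fun p _ => by rw [hdiag, map_mul, map_mul, h0, mul_zero, zero_mul]
  have hentry : ∀ z : Matrix n n F,
      g (single k k 1) * g z * g (single l k 1) = z k l • g (single k k 1) := by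
    intro z
    rw [← map_mul, ← map_mul, single_mul_mul_single, one_mul, mul_one, ← map_smul,
      smul_single, smul_eq_mul, mul_one]
  exact hS _ hunit ((hentry x).symm.trans (hxy ▸ hentry y))

def Pi.singleNonUnitalAlgHom (R : Type*) {ι : Type*} (A : ι → Type*) [DecidableEq ι] [Monoid R]
    [∀ i, NonUnitalNonAssocSemiring (A i)] [∀ i, DistribMulAction R (A i)] (i : ι) :
    A i →ₙₐ[R] ∀ i, A i where
  toFun := Pi.single i
  map_smul' := Pi.single_smul i
  map_zero' := Pi.single_zero i
  map_add' := Pi.single_add i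
  map_mul' := Pi.single_mul i

def Pi.restrictAlgHom (R : Type*) {ι : Type*} (A : ι → Type*) [CommSemiring R]
    [∀ i, Semiring (A i)] [∀ i, Algebra R (A i)] (s : Set ι) :
    (∀ i, A i) →ₐ[R] ∀ i : s, A i :=
  AlgHom.pi fun i => Pi.evalAlgHom R A i

theorem Pi.restrictAlgHom_surjective (R : Type*) {ι : Type*} (A : ι → Type*) [CommSemiring R]
    [∀ i, Semiring (A i)] [∀ i, Algebra R (A i)] (s : Set ι) :
    Surjective (Pi.restrictAlgHom R A s) := by
  classical
  exact fun x => ⟨fun i => if h : i ∈ s then x ⟨i, h⟩ else 0, funext fun i => dif_pos i.2⟩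

noncomputable def AlgHom.rangeEquivRangeOfKerEq {R M N P : Type*} [CommSemiring R]
    [Semiring M] [Algebra R M] [Semiring N] [Algebra R N] [Semiring P] [Algebra R P]
    {f : M →ₐ[R] N} {g : M →ₐ[R] P} (h : RingCon.ker f.toRingHom = RingCon.ker g.toRingHom) :
    f.range ≃ₐ[R] g.range :=
  (RingCon.quotientKerEquivRangeₐ f).symm.trans <|
    (RingCon.congrₐ R AlgEquiv.refl (h ▸ rfl)).trans (RingCon.quotientKerEquivRangeₐ g)

namespace AlgHom

variable {R ι S : Type*} {A : ι → Type*} [CommSemiring R] [∀ i, Semiring (A i)]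
  [∀ i, Algebra R (A i)] [Semiring S] [Algebra R S] [DecidableEq ι]

open Classical in
noncomputable def piSupport [Fintype ι] (φ : (∀ i, A i) →ₐ[R] S) : Finset ι :=
  {i | φ (Pi.single i 1) ≠ 0}

theorem map_single_apply (φ : (∀ i, A i) →ₐ[R] S) (x : ∀ i, A i) (i : ι) :
    φ (Pi.single i (x i)) = φ (Pi.single i 1) * φ x := by
  rw [← map_mul, ← Pi.single_mul_left, one_mul]

theorem map_single_eq_zero_of_notMem_piSupport [Fintype ι] {φ : (∀ i, A i) →ₐ[R] S} {i : ι}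
    (hi : i ∉ φ.piSupport) (a : A i) : φ (Pi.single i a) = 0 := by
  have h0 : φ (Pi.single i 1) = 0 := by simpa [piSupport] using hi
  simpa [h0] using φ.map_single_apply (Pi.single i a) i

theorem apply_eq_sum_piSupport [Fintype ι] (φ : (∀ i, A i) →ₐ[R] S) (x : ∀ i, A i) :
    φ x = ∑ i ∈ φ.piSupport, φ (Pi.single i (x i)) := by
  conv_lhs => rw [← Finset.univ_sum_single x, map_sum]
  exact (Finset.sum_subset (Finset.subset_univ _)
    fun i _ hi => map_single_eq_zero_of_notMem_piSupport hi (x i)).symm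

end AlgHom

theorem Matrix.pi_algHom_apply_eq_apply_iff {ι F S : Type*} {m : ι → Type*} [Fintype ι]
    [DecidableEq ι] [∀ i, Fintype (m i)] [∀ i, DecidableEq (m i)] [Semifield F] [Semiring S]
    [Algebra F S]
    (hS : ∀ u : S, u ≠ 0 → Injective fun c : F => c • u)
    (φ : (∀ i, Matrix (m i) (m i) F) →ₐ[F] S) {x y : ∀ i, Matrix (m i) (m i) F} :
    φ x = φ y ↔ ∀ i ∈ φ.piSupport, x i = y i := by
  refine ⟨fun h i hi => ?_, fun h => ?_⟩
  · have hφi : φ (Pi.single i 1) ≠ 0 := by simpa [AlgHom.piSupport] using hi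
    refine Matrix.nonUnitalAlgHom_injective_of_map_one_ne_zero hS
      (φ.toNonUnitalAlgHom.comp (Pi.singleNonUnitalAlgHom F (fun i => Matrix (m i) (m i) F) i))
      hφi ?_
    change φ (Pi.single i (x i)) = φ (Pi.single i (y i))
    rw [φ.map_single_apply, φ.map_single_apply, h]
  · rw [φ.apply_eq_sum_piSupport x, φ.apply_eq_sum_piSupport y]
    exact Finset.sum_congr rfl fun i hi => by rw [h i hi]

/-- The image of a matricial algebra `M_{n₁}(F) × ⋯ × M_{n_r}(F)` over a semifield `F`
under an `F`-algebra homomorphism into a matricial `F`-algebra is isomorphic to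
`∏_{j ∈ J} M_{n_j}(F)` for some subset `J ⊆ {1,…,r}`; in particular it is itself a
matricial `F`-algebra. -/
theorem image_of_matricial_algebra (F : Type) [Semifield F] (r : ℕ) (n : Fin r → ℕ+)
    (S : Type) [Semiring S] [Algebra F S]
    (hS : ∃ (s : ℕ) (m : Fin s → ℕ+),
      Nonempty (S ≃ₐ[F] ∀ j, Matrix (Fin (m j)) (Fin (m j)) F))
    (φ : (∀ i, Matrix (Fin (n i)) (Fin (n i)) F) →ₐ[F] S) :
    ∃ J : Finset (Fin r),
      Nonempty (φ.range ≃ₐ[F] ∀ j : J, Matrix (Fin (n j)) (Fin (n j)) F) := by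
  obtain ⟨s, m, ⟨e⟩⟩ := hS
  have hcancel : ∀ u : S, u ≠ 0 → Injective fun c : F => c • u := fun u hu c d h =>
    Matrix.pi_smul_left_injective (e.map_ne_zero_iff.2 hu) (by simpa using congrArg e h)
  let π := Pi.restrictAlgHom F (fun i => Matrix (Fin (n i)) (Fin (n i)) F) φ.piSupport
  have hker : RingCon.ker φ.toRingHom = RingCon.ker π.toRingHom := by
    ext x y
    simp [RingCon.ker_apply, Matrix.pi_algHom_apply_eq_apply_iff hcancel, funext_iff, π,
      Pi.restrictAlgHom]
  have hrange : π.range = ⊤ := π.range_eq_top.2 (Pi.restrictAlgHom_surjective F _ _)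
  exact ⟨φ.piSupport, ⟨(φ.rangeEquivRangeOfKerEq hker).trans
    ((Subalgebra.equivOfEq _ _ hrange).trans Subalgebra.topEquiv)⟩⟩
end

section
/- Let S be a zerosumfree entire semiring and let P, Q be finitely generated projective right S-semimodules. Then dim_w(P ⊕ Q) = dim_w(P) + dim_w(Q), where dim_w(M) denotes the weak dimension of M, i.e., the minimum cardinality of a generating family of M. -/
/-- The weak dimension of a semimodule: the minimum cardinality of a (finite)
generating family. -/
noncomputable def dimw (S M : Type) [Semiring S] [AddCommMonoid M] [Module S M] : ℕ :=
  sInf {n : ℕ | ∃ f : Fin n → M, Submodule.span S (Set.range f) = ⊤}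

/-- In a "zerosumfree" additive monoid, a finite sum is zero iff all terms are zero. -/
private lemma zsf_sum {ι M : Type*} [AddCommMonoid M]
    (h : ∀ x y : M, x + y = 0 → x = 0 ∧ y = 0) :
    ∀ (s : Finset ι) (f : ι → M), (∑ i ∈ s, f i) = 0 → ∀ i ∈ s, f i = 0 := by
  intro s
  induction s using Finset.cons_induction with
  | empty => intro f _ i hi; exact absurd hi (Finset.notMem_empty i)
  | cons a s ha ih =>
    intro f hs i hi
    rw [Finset.sum_cons] at hs
    obtain ⟨h1, h2⟩ := h _ _ hs
    rcases Finset.mem_cons.mp hi with rfl | hi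
    · exact h1
    · exact ih f h2 i hi

/-- A projective module over a zerosumfree entire semiring is zerosumfree and torsion-free. -/
private lemma proj_props (S M : Type) [Semiring S] [AddCommMonoid M] [Module S M]
    (hzs : ∀ a b : S, a + b = 0 → a = 0 ∧ b = 0)
    (hent : ∀ a b : S, a * b = 0 → a = 0 ∨ b = 0)
    (hM : Module.Projective S M) :
    (∀ x y : M, x + y = 0 → x = 0 ∧ y = 0) ∧
    (∀ (c : S) (x : M), c • x = 0 → c = 0 ∨ x = 0) := by
  obtain ⟨s, hs⟩ := hM.out
  have hinj : Function.Injective s := Function.LeftInverse.injective hs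
  constructor
  · intro x y hxy
    have hsum : s x + s y = 0 := by rw [← map_add, hxy, map_zero]
    have key : ∀ a, s x a = 0 ∧ s y a = 0 := by
      intro a
      have := DFunLike.congr_fun hsum a
      simp only [Finsupp.add_apply, Finsupp.coe_zero, Pi.zero_apply] at this
      exact hzs _ _ this
    constructor
    · apply hinj; rw [map_zero]; ext a; exact (key a).1
    · apply hinj; rw [map_zero]; ext a; exact (key a).2
  · intro c x hcx
    by_cases hx : x = 0
    · exact Or.inr hx
    left
    have hsx : s x ≠ 0 := fun h0 => hx (hinj (by rw [h0, map_zero]))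
    obtain ⟨a, ha⟩ : ∃ a, s x a ≠ 0 := by
      by_contra hall
      push_neg at hall
      exact hsx (Finsupp.ext hall)
    have hz : c • s x = 0 := by rw [← map_smul, hcx, map_zero]
    have : c * s x a = 0 := by
      have := DFunLike.congr_fun hz a
      simpa [Finsupp.smul_apply, smul_eq_mul] using this
    rcases hent _ _ this with h | h
    · exact h
    · exact absurd h ha

/-- Over a zerosumfree entire semiring, the weak dimension is additive on direct sums
of finitely generated projective semimodules. -/
theorem dimw_add_of_zerosumfree_entire (S : Type) [Semiring S]
    (hzs : ∀ a b : S, a + b = 0 → a = 0 ∧ b = 0)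
    (hent : ∀ a b : S, a * b = 0 → a = 0 ∨ b = 0)
    (P Q : Type) [AddCommMonoid P] [Module S P] [AddCommMonoid Q] [Module S Q]
    [Module.Finite S P] [Module.Finite S Q]
    (hP : Module.Projective S P) (hQ : Module.Projective S Q) :
    dimw S (P × Q) = dimw S P + dimw S Q := by
  classical
  obtain ⟨hzsQ, htfQ⟩ := proj_props S Q hzs hent hQ
  -- the defining sets are nonempty
  have hPne : {n : ℕ | ∃ f : Fin n → P, Submodule.span S (Set.range f) = ⊤}.Nonempty := by
    obtain ⟨n, f, hf⟩ := Module.Finite.exists_fin (R := S) (M := P)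
    exact ⟨n, f, hf⟩
  have hQne : {n : ℕ | ∃ f : Fin n → Q, Submodule.span S (Set.range f) = ⊤}.Nonempty := by
    obtain ⟨n, f, hf⟩ := Module.Finite.exists_fin (R := S) (M := Q)
    exact ⟨n, f, hf⟩
  have hPQne : {n : ℕ | ∃ f : Fin n → P × Q, Submodule.span S (Set.range f) = ⊤}.Nonempty := by
    obtain ⟨n, f, hf⟩ := Module.Finite.exists_fin (R := S) (M := P × Q)
    exact ⟨n, f, hf⟩
  apply le_antisymm
  · -- upper bound: concatenate generating families
    obtain ⟨f, hf⟩ : ∃ f : Fin (dimw S P) → P, Submodule.span S (Set.range f) = ⊤ :=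
      Nat.sInf_mem hPne
    obtain ⟨g, hg⟩ : ∃ g : Fin (dimw S Q) → Q, Submodule.span S (Set.range g) = ⊤ :=
      Nat.sInf_mem hQne
    set h : Fin (dimw S P + dimw S Q) → P × Q :=
      Fin.append (fun i => ((f i, 0) : P × Q)) (fun j => ((0, g j) : P × Q)) with hh
    have hspan : Submodule.span S (Set.range h) = ⊤ := by
      rw [eq_top_iff]
      rintro ⟨p, q⟩ -
      have hp : ((p, 0) : P × Q) ∈ Submodule.span S (Set.range h) := by
        have hp0 : p ∈ Submodule.span S (Set.range f) := by rw [hf]; trivial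
        have : ((p, 0) : P × Q) ∈
            Submodule.map (LinearMap.inl S P Q) (Submodule.span S (Set.range f)) :=
          ⟨p, hp0, rfl⟩
        rw [Submodule.map_span] at this
        refine Submodule.span_mono ?_ this
        rintro _ ⟨_, ⟨i, rfl⟩, rfl⟩
        exact ⟨Fin.castAdd _ i, by simp [hh, Fin.append_left]⟩
      have hq : ((0, q) : P × Q) ∈ Submodule.span S (Set.range h) := by
        have hq0 : q ∈ Submodule.span S (Set.range g) := by rw [hg]; trivial
        have : ((0, q) : P × Q) ∈
            Submodule.map (LinearMap.inr S P Q) (Submodule.span S (Set.range g)) :=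
          ⟨q, hq0, rfl⟩
        rw [Submodule.map_span] at this
        refine Submodule.span_mono ?_ this
        rintro _ ⟨_, ⟨j, rfl⟩, rfl⟩
        exact ⟨Fin.natAdd _ j, by simp [hh, Fin.append_right]⟩
      have : ((p, q) : P × Q) = (p, 0) + (0, q) := by simp
      rw [this]
      exact Submodule.add_mem _ hp hq
    exact Nat.sInf_le ⟨h, hspan⟩
  · -- lower bound
    set n := dimw S (P × Q) with hn
    obtain ⟨g, hg⟩ : ∃ g : Fin n → P × Q,
        Submodule.span S (Set.range g) = ⊤ := Nat.sInf_mem hPQne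
    set T : Finset (Fin n) := Finset.univ.filter (fun j => (g j).2 = 0) with hT
    set T' : Finset (Fin n) := Finset.univ.filter (fun j => ¬ (g j).2 = 0) with hT'
    -- {p_j : j ∈ T} generates P
    have hgenP : dimw S P ≤ T.card := by
      set f' : Fin T.card → P := fun i => (g ((T.equivFin.symm i) : Fin n)).1 with hf'
      have hspan : Submodule.span S (Set.range f') = ⊤ := by
        rw [eq_top_iff]
        intro p _
        have hmem : ((p, 0) : P × Q) ∈ Submodule.span S (Set.range g) := by rw [hg]; trivial
        rw [Submodule.mem_span_range_iff_exists_fun S] at hmem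
        obtain ⟨c, hc⟩ := hmem
        have h2 : (∑ i, c i • (g i).2) = 0 := by
          have := congrArg Prod.snd hc
          simpa [Prod.fst_sum, Prod.snd_sum] using this
        have hterm : ∀ i ∈ Finset.univ, c i • (g i).2 = 0 :=
          zsf_sum hzsQ Finset.univ _ h2
        have hcz : ∀ i : Fin n, i ∉ T → c i = 0 := by
          intro i hi
          have hqi : (g i).2 ≠ 0 := by
            simpa [hT, Finset.mem_filter] using hi
          rcases htfQ (c i) ((g i).2) (hterm i (Finset.mem_univ i)) with h | h
          · exact h
          · exact absurd h hqi
        have h1 : (∑ i, c i • (g i).1) = p := by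
          have := congrArg Prod.fst hc
          simpa [Prod.fst_sum, Prod.snd_sum] using this
        have hpT : p = ∑ i ∈ T, c i • (g i).1 := by
          rw [← h1]
          exact (Finset.sum_subset (Finset.subset_univ T)
            (fun i _ hi => by rw [hcz i hi, zero_smul])).symm
        rw [hpT]
        refine Submodule.sum_mem _ ?_
        intro i hi
        refine Submodule.smul_mem _ _ (Submodule.subset_span ?_)
        refine ⟨T.equivFin ⟨i, hi⟩, ?_⟩
        simp [hf']
      exact Nat.sInf_le ⟨f', hspan⟩
    -- {q_j : j ∈ T'} generates Q
    have hgenQ : dimw S Q ≤ T'.card := by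
      set f' : Fin T'.card → Q := fun i => (g ((T'.equivFin.symm i) : Fin n)).2 with hf'
      have hspan : Submodule.span S (Set.range f') = ⊤ := by
        rw [eq_top_iff]
        intro q _
        have hmem : ((0, q) : P × Q) ∈ Submodule.span S (Set.range g) := by rw [hg]; trivial
        rw [Submodule.mem_span_range_iff_exists_fun S] at hmem
        obtain ⟨c, hc⟩ := hmem
        have h2 : (∑ i, c i • (g i).2) = q := by
          have := congrArg Prod.snd hc
          simpa [Prod.fst_sum, Prod.snd_sum] using this
        have hqT : q = ∑ i ∈ T', c i • (g i).2 := by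
          rw [← h2]
          refine (Finset.sum_subset (Finset.subset_univ T') ?_).symm
          intro i _ hi
          have : (g i).2 = 0 := by
            by_contra hne
            exact hi (by simpa [hT', Finset.mem_filter] using hne)
          rw [this, smul_zero]
        rw [hqT]
        refine Submodule.sum_mem _ ?_
        intro i hi
        refine Submodule.smul_mem _ _ (Submodule.subset_span ?_)
        refine ⟨T'.equivFin ⟨i, hi⟩, ?_⟩
        simp [hf']
      exact Nat.sInf_le ⟨f', hspan⟩
    have hcard : T.card + T'.card = n :=
      Finset.card_filter_add_card_filter_not (s := Finset.univ)
        (p := fun j => (g j).2 = 0) |>.trans (Finset.card_univ.trans (Fintype.card_fin n))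
    calc dimw S P + dimw S Q ≤ T.card + T'.card := Nat.add_le_add hgenP hgenQ
      _ = n := hcard
end
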